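/- arXiv:math/0511608 — 2 statements merged into one kernel-verified Lean document; each statement's English description precedes it below -/
import Mathlib

section
/- If A and B are root-saturated subsets of the A_{n-1} root lattice, H_A is the smallest affine subspace containing conv(A), H_B the smallest affine subspace containing conv(B), and H_A ∩ H_B is a single point z_0, then z_0 lies in the root lattice Q(R). -/
open Finset Pointwise

/-- Coercion of an integer vector to a real vector. -/
def coeZ {n : ℕ} (v : Fin n → ℤ) : Fin n → ℝ := fun i => (v i : ℝ)

/-- The root `e_i - e_j` of `SL(n, ℂ)`, as an integer vector. -/
def rootZ (n : ℕ) (i j : Fin n) : Fin n → ℤ :=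
  fun t => (if t = i then 1 else 0) - (if t = j then 1 else 0)

/-- The root `e_i - e_j` as a real vector. -/
def rootR (n : ℕ) (i j : Fin n) : Fin n → ℝ :=
  fun t => (if t = i then 1 else 0) - (if t = j then 1 else 0)

/-- A vector is a root of `SL(n, ℂ)`. -/
def IsRootVec {n : ℕ} (v : Fin n → ℤ) : Prop :=
  ∃ i j : Fin n, i ≠ j ∧ v = rootZ n i j

/-- `E` is an edge (a one-dimensional face) of the set `P`. -/
def IsEdge {n : ℕ} (P E : Set (Fin n → ℝ)) : Prop :=
  IsExtreme ℝ P E ∧ Module.finrank ℝ (affineSpan ℝ E).direction = 1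

/-- The edge `E` is parallel to the root `e_i - e_j` for some `i ≠ j`. -/
def EdgeParallelRoot {n : ℕ} (E : Set (Fin n → ℝ)) : Prop :=
  ∃ i j : Fin n, i ≠ j ∧ ∀ x ∈ E, ∀ y ∈ E, ∃ c : ℝ, x - y = c • rootR n i j

/-- A finite subset of the root lattice of `SL(n, ℂ)` is root-saturated if every
edge of its convex hull is parallel to a root, and it equals the intersection of
its convex hull with the root lattice. -/
def RootSaturated {n : ℕ} (A : Finset (Fin n → ℤ)) : Prop :=
  (∀ v ∈ A, ∑ i, v i = 0) ∧
  (∀ E : Set (Fin n → ℝ),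
      IsEdge (convexHull ℝ (coeZ '' (A : Set (Fin n → ℤ)))) E → EdgeParallelRoot E) ∧
  (∀ v : Fin n → ℤ, ∑ i, v i = 0 →
      coeZ v ∈ convexHull ℝ (coeZ '' (A : Set (Fin n → ℤ))) → v ∈ A)

/-- The indicator vector (in `ℤ^n`) of a subset `S ⊆ {1, …, n}`. -/
def indZ {n : ℕ} (S : Finset (Fin n)) : Fin n → ℤ := fun i => if i ∈ S then 1 else 0

/-- The indicator vector (in `ℝ^n`) of a subset `S ⊆ {1, …, n}`. -/
def indR {n : ℕ} (S : Finset (Fin n)) : Fin n → ℝ := fun i => if i ∈ S then 1 else 0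

/-- `B` is the collection of bases of a matroid on `{1, …, n}`: it is nonempty and
satisfies the basis exchange axiom. -/
def IsMatroidBases {n : ℕ} (B : Finset (Finset (Fin n))) : Prop :=
  B.Nonempty ∧
  ∀ B₁ ∈ B, ∀ B₂ ∈ B, ∀ x ∈ B₁ \ B₂, ∃ y ∈ B₂ \ B₁, insert y (B₁.erase x) ∈ B

section Cone
variable {n : ℕ}

/-- membership in the convex cone generated by a finite set -/
def InCone (G : Finset (Fin n → ℝ)) (x : Fin n → ℝ) : Prop :=
  ∃ f : (Fin n → ℝ) → ℝ, (∀ t, 0 ≤ f t) ∧ x = ∑ t ∈ G, f t • t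

lemma InCone.zero (G : Finset (Fin n → ℝ)) : InCone G 0 :=
  ⟨0, fun _ => le_refl _, by simp⟩

lemma InCone.gen {G : Finset (Fin n → ℝ)} {t₀ : Fin n → ℝ} (h : t₀ ∈ G) : InCone G t₀ := by
  classical
  refine ⟨fun t => if t = t₀ then 1 else 0, fun t => by positivity, ?_⟩
  rw [Finset.sum_eq_single t₀]
  · simp
  · intro b _ hb; simp [hb]
  · intro h'; exact absurd h h'

lemma InCone.add {G : Finset (Fin n → ℝ)} {x y : Fin n → ℝ}
    (hx : InCone G x) (hy : InCone G y) : InCone G (x + y) := by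
  obtain ⟨f, hf, rfl⟩ := hx
  obtain ⟨g, hg, rfl⟩ := hy
  exact ⟨f + g, fun t => add_nonneg (hf t) (hg t), by
    rw [← Finset.sum_add_distrib]; exact Finset.sum_congr rfl fun t _ => by
      simp [add_smul]⟩

lemma InCone.smul {G : Finset (Fin n → ℝ)} {x : Fin n → ℝ} {c : ℝ}
    (hc : 0 ≤ c) (hx : InCone G x) : InCone G (c • x) := by
  obtain ⟨f, hf, rfl⟩ := hx
  exact ⟨c • f, fun t => mul_nonneg hc (hf t), by
    rw [Finset.smul_sum]; exact Finset.sum_congr rfl fun t _ => by simp [smul_smul]⟩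

lemma InCone.mono {G G' : Finset (Fin n → ℝ)} (hGG : G ⊆ G') {x : Fin n → ℝ}
    (hx : InCone G x) : InCone G' x := by
  classical
  obtain ⟨f, hf, rfl⟩ := hx
  refine ⟨fun t => if t ∈ G then f t else 0, fun t => by dsimp; split <;> simp [hf], ?_⟩
  rw [← Finset.sum_subset hGG (fun t _ htG => by simp [htG])]
  exact Finset.sum_congr rfl fun t ht => by simp [ht]

/-- substitution: if a generator is redundant, drop it. -/
lemma InCone.drop {G : Finset (Fin n → ℝ)} {g₀ : Fin n → ℝ}
    (hg : InCone (G.erase g₀) g₀) {x : Fin n → ℝ} (hx : InCone G x) :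
    InCone (G.erase g₀) x := by
  classical
  by_cases hg₀ : g₀ ∈ G
  · obtain ⟨f, hf, rfl⟩ := hx
    have : ∑ t ∈ G, f t • t = (∑ t ∈ G.erase g₀, f t • t) + f g₀ • g₀ := by
      rw [add_comm, ← Finset.sum_erase_add _ _ hg₀, add_comm]
    rw [this]
    exact InCone.add ⟨f, hf, rfl⟩ (InCone.smul (hf g₀) hg)
  · simpa [hg₀] using hx

/-- A finitely generated cone has a minimal generating set. -/
lemma exists_minimal_generators (G : Finset (Fin n → ℝ)) :
    ∃ T ⊆ G, (∀ x, InCone G x ↔ InCone T x) ∧ ∀ t ∈ T, ¬ InCone (T.erase t) t := by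
  classical
  induction G using Finset.strongInduction with
  | _ G ih =>
    by_cases h : ∀ t ∈ G, ¬ InCone (G.erase t) t
    · exact ⟨G, Finset.Subset.refl _, fun x => Iff.rfl, h⟩
    · push_neg at h
      obtain ⟨g₀, hg₀, hred⟩ := h
      obtain ⟨T, hTsub, hTiff, hTmin⟩ := ih (G.erase g₀) (Finset.erase_ssubset hg₀)
      refine ⟨T, hTsub.trans (Finset.erase_subset _ _), fun x => ?_, hTmin⟩
      constructor
      · intro hx; exact (hTiff x).1 (InCone.drop hred hx)
      · intro hx; exact ((hx.mono hTsub).mono (Finset.erase_subset _ _))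

end Cone

section L2
variable {n : ℕ}

lemma minimal_gen_extreme {T : Finset (Fin n → ℝ)}
    (hpointed : ∀ x, InCone T x → InCone T (-x) → x = 0)
    {t₀ : Fin n → ℝ} (ht₀T : t₀ ∈ T) (hmin : ¬ InCone (T.erase t₀) t₀)
    {x y : Fin n → ℝ} {c : ℝ} (hx : InCone T x) (hy : InCone T y)
    (hc : 0 ≤ c) (hxy : x + y = c • t₀) : ∃ d : ℝ, 0 ≤ d ∧ x = d • t₀ := by
  have ht₀ : t₀ ≠ 0 := fun h => hmin (h ▸ InCone.zero _)
  obtain ⟨α, hα, hxval⟩ := hx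
  obtain ⟨β, hβ, hyval⟩ := hy
  set γ : (Fin n → ℝ) → ℝ := fun t => α t + β t with hγdef
  have hγ : ∀ t, 0 ≤ γ t := fun t => add_nonneg (hα t) (hβ t)
  have hsum : ∑ t ∈ T, γ t • t = c • t₀ := by
    rw [← hxy, hxval, hyval, ← Finset.sum_add_distrib]
    exact Finset.sum_congr rfl fun t _ => by simp [hγdef, add_smul]
  have key : ∑ t ∈ T.erase t₀, γ t • t = (c - γ t₀) • t₀ := by
    have := Finset.sum_erase_add T (fun t => γ t • t) ht₀T
    rw [hsum] at this
    rw [sub_smul]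
    linear_combination (norm := module) this
  rcases lt_trichotomy (c - γ t₀) 0 with hlt | heq | hgt
  · exfalso
    set μ := γ t₀ - c with hμdef
    have hμ : 0 < μ := by simp [hμdef]; linarith
    have h1 : InCone T (μ • t₀) := InCone.smul hμ.le (InCone.gen ht₀T)
    have h2 : InCone T (-(μ • t₀)) := by
      have : -(μ • t₀) = ∑ t ∈ T.erase t₀, γ t • t := by
        rw [key, hμdef]; module
      rw [this]
      exact InCone.mono (Finset.erase_subset _ _) ⟨γ, hγ, rfl⟩
    have := hpointed _ h1 h2
    rcases smul_eq_zero.1 this with h | h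
    · exact hμ.ne' h
    · exact ht₀ h
  · -- c = γ t₀ : the erased sum vanishes
    rw [heq, zero_smul] at key
    set u := ∑ t ∈ T.erase t₀, α t • t with hudef
    set w := ∑ t ∈ T.erase t₀, β t • t with hwdef
    have huw : u + w = 0 := by
      rw [hudef, hwdef, ← Finset.sum_add_distrib, ← key]
      exact Finset.sum_congr rfl fun t _ => by simp [hγdef, add_smul]
    have hu : InCone T u := InCone.mono (Finset.erase_subset _ _) ⟨α, hα, rfl⟩
    have hw : InCone T (-u) := by
      have h' : -u = w := neg_eq_of_add_eq_zero_right huw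
      rw [h']; exact InCone.mono (Finset.erase_subset _ _) ⟨β, hβ, rfl⟩
    have hu0 : u = 0 := hpointed _ hu hw
    refine ⟨α t₀, hα t₀, ?_⟩
    rw [hxval, ← Finset.sum_erase_add T (fun t => α t • t) ht₀T, ← hudef, hu0, zero_add]
  · exfalso
    apply hmin
    refine ⟨fun t => (c - γ t₀)⁻¹ * γ t, fun t => mul_nonneg (inv_nonneg.2 hgt.le) (hγ t), ?_⟩
    have : ∑ t ∈ T.erase t₀, ((c - γ t₀)⁻¹ * γ t) • t
        = (c - γ t₀)⁻¹ • ∑ t ∈ T.erase t₀, γ t • t := by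
      rw [Finset.smul_sum]
      exact Finset.sum_congr rfl fun t _ => by simp [smul_smul]
    rw [this, key, smul_smul, inv_mul_cancel₀ hgt.ne', one_smul]

end L2

section Geom
variable {n : ℕ}

/-- points of the convex hull give cone elements -/
lemma hull_sub_mem_cone (s : Finset (Fin n → ℝ)) (v₀ : Fin n → ℝ) (hv₀ : v₀ ∈ s)
    {p : Fin n → ℝ} (hp : p ∈ convexHull ℝ (↑s : Set (Fin n → ℝ))) :
    InCone (s.image (fun a => a - v₀)) (p - v₀) := by
  classical
  rw [Finset.convexHull_eq] at hp
  obtain ⟨w, hw0, hw1, hwp⟩ := hp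
  have hcm : ∑ a ∈ s, w a • a = p := by
    rw [← Finset.centerMass_eq_of_sum_1 _ _ hw1]
    exact hwp
  refine ⟨fun g => if g + v₀ ∈ s then w (g + v₀) else 0, ?_, ?_⟩
  · intro t; dsimp; split
    · exact hw0 _ ‹_›
    · exact le_rfl
  · rw [Finset.sum_image (fun a _ b _ h => by simpa using sub_left_injective h)]
    have : ∀ a ∈ s, (if a - v₀ + v₀ ∈ s then w (a - v₀ + v₀) else 0) • (a - v₀)
        = w a • (a - v₀) := by
      intro a ha; rw [sub_add_cancel]; simp [ha]
    rw [Finset.sum_congr rfl this]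
    have : ∑ a ∈ s, w a • (a - v₀) = (∑ a ∈ s, w a • a) - (∑ a ∈ s, w a) • v₀ := by
      rw [Finset.sum_smul, ← Finset.sum_sub_distrib]
      exact Finset.sum_congr rfl fun a _ => by rw [smul_sub]
    rw [this, hcm, hw1, one_smul]

/-- a nonzero cone element points into the hull, after scaling -/
lemma cone_scale_mem_hull (s : Finset (Fin n → ℝ)) (v₀ : Fin n → ℝ) (hv₀ : v₀ ∈ s)
    {x : Fin n → ℝ} (hx : InCone (s.image (fun a => a - v₀)) x) (hx0 : x ≠ 0) :
    ∃ ε : ℝ, 0 < ε ∧ v₀ + ε • x ∈ convexHull ℝ (↑s : Set (Fin n → ℝ)) := by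
  classical
  obtain ⟨f, hf, hxval⟩ := hx
  set G := s.image (fun a => a - v₀) with hGdef
  set S := ∑ g ∈ G, f g with hSdef
  have hS0 : 0 ≤ S := Finset.sum_nonneg fun g _ => hf g
  have hSpos : 0 < S := by
    rcases hS0.lt_or_eq with h | h
    · exact h
    · exfalso; apply hx0
      rw [hxval]
      apply Finset.sum_eq_zero
      intro g hg
      have := (Finset.sum_eq_zero_iff_of_nonneg (fun g _ => hf g)).1 h.symm g hg
      rw [this, zero_smul]
    -- done
  refine ⟨S⁻¹, inv_pos.2 hSpos, ?_⟩
  -- the point as a convex combination over s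
  set w : (Fin n → ℝ) → ℝ := fun a => S⁻¹ * f (a - v₀)
  have hw0 : ∀ a ∈ s, 0 ≤ w a := fun a _ => mul_nonneg (inv_nonneg.2 hSpos.le) (hf _)
  have hw1 : ∑ a ∈ s, w a = 1 := by
    have : ∑ a ∈ s, f (a - v₀) = S := by
      rw [hSdef, hGdef, Finset.sum_image (fun a _ b _ h => by simpa using sub_left_injective h)]
    simp only [w, ← Finset.mul_sum, this]
    exact inv_mul_cancel₀ hSpos.ne'
  have hval : ∑ a ∈ s, w a • a = v₀ + S⁻¹ • x := by
    have h1 : ∑ a ∈ s, w a • (a - v₀) = S⁻¹ • x := by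
      rw [hxval, hGdef, Finset.smul_sum,
        Finset.sum_image (fun a _ b _ h => by simpa using sub_left_injective h)]
      exact Finset.sum_congr rfl fun a _ => by rw [smul_smul]
    have h2 : ∑ a ∈ s, w a • (a - v₀) = (∑ a ∈ s, w a • a) - (∑ a ∈ s, w a) • v₀ := by
      rw [Finset.sum_smul, ← Finset.sum_sub_distrib]
      exact Finset.sum_congr rfl fun a _ => by rw [smul_sub]
    rw [h2, hw1, one_smul] at h1
    linear_combination (norm := module) h1
  rw [← hval]
  have := Finset.centerMass_mem_convexHull s hw0 (by rw [hw1]; norm_num)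
    (fun a ha => Finset.mem_coe.2 ha)
  rw [Finset.centerMass_eq_of_sum_1 _ _ hw1] at this
  exact this

/-- pointedness of the tangent cone at an extreme point -/
lemma cone_pointed (s : Finset (Fin n → ℝ)) (v₀ : Fin n → ℝ) (hv₀ : v₀ ∈ s)
    (hext : v₀ ∈ Set.extremePoints ℝ (convexHull ℝ (↑s : Set (Fin n → ℝ)))) :
    ∀ x, InCone (s.image (fun a => a - v₀)) x →
      InCone (s.image (fun a => a - v₀)) (-x) → x = 0 := by
  intro x hx hnx
  by_contra hx0
  obtain ⟨ε₁, hε₁, hp⟩ := cone_scale_mem_hull s v₀ hv₀ hx hx0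
  obtain ⟨ε₂, hε₂, hq⟩ := cone_scale_mem_hull s v₀ hv₀ hnx (by simpa using hx0)
  rw [mem_extremePoints] at hext
  have hseg : v₀ ∈ openSegment ℝ (v₀ + ε₁ • x) (v₀ + ε₂ • (-x)) := by
    refine ⟨ε₂ / (ε₁ + ε₂), ε₁ / (ε₁ + ε₂), by positivity, by positivity,
      by field_simp; ring, ?_⟩
    have h : ε₁ + ε₂ ≠ 0 := by positivity
    rw [div_eq_inv_mul, div_eq_inv_mul, mul_smul, mul_smul, ← smul_add,
      show ε₂ • (v₀ + ε₁ • x) + ε₁ • (v₀ + ε₂ • (-x)) = (ε₁ + ε₂) • v₀ from by module,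
      smul_smul, inv_mul_cancel₀ h, one_smul]
  have := (hext.2 _ hp _ hq hseg).1
  apply hx0
  have : ε₁ • x = 0 := by
    have h := this
    have : v₀ + ε₁ • x = v₀ + 0 := by rw [h, add_zero]
    exact add_left_cancel this
  rcases smul_eq_zero.1 this with h | h
  · exact absurd h hε₁.ne'
  · exact h

end Geom

section Main
variable {n : ℕ}

lemma vectorSpan_le_span_roots (s : Finset (Fin n → ℝ))
    (hEdge : ∀ E : Set (Fin n → ℝ),
      IsEdge (convexHull ℝ (↑s : Set (Fin n → ℝ))) E → EdgeParallelRoot E) :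
    vectorSpan ℝ (↑s : Set (Fin n → ℝ)) ≤
      Submodule.span ℝ {r : Fin n → ℝ | (∃ i j, i ≠ j ∧ r = rootR n i j) ∧
        r ∈ vectorSpan ℝ (↑s : Set (Fin n → ℝ))} := by
  classical
  rcases s.eq_empty_or_nonempty with rfl | hne
  · rw [Finset.coe_empty, vectorSpan_empty]; exact bot_le
  have hcomp : IsCompact (convexHull ℝ (↑s : Set (Fin n → ℝ))) :=
    s.finite_toSet.isCompact_convexHull ℝ
  have hnemp : (convexHull ℝ (↑s : Set (Fin n → ℝ))).Nonempty :=
    ⟨hne.choose, subset_convexHull ℝ _ (Finset.mem_coe.2 hne.choose_spec)⟩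
  obtain ⟨v₀, hv₀ext⟩ := hcomp.extremePoints_nonempty hnemp
  have hv₀s : v₀ ∈ s := Finset.mem_coe.1 (extremePoints_convexHull_subset hv₀ext)
  set G := s.image (fun a => a - v₀) with hGdef
  obtain ⟨T, hTG, hTiff, hTmin⟩ := exists_minimal_generators G
  have hpointedT : ∀ x, InCone T x → InCone T (-x) → x = 0 := fun x hx hnx =>
    cone_pointed s v₀ hv₀s hv₀ext x ((hTiff x).2 hx) ((hTiff _).2 hnx)
  set RS : Set (Fin n → ℝ) := {r : Fin n → ℝ | (∃ i j, i ≠ j ∧ r = rootR n i j) ∧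
        r ∈ vectorSpan ℝ (↑s : Set (Fin n → ℝ))} with hRSdef
  have hTspan : ∀ t ∈ T, t ∈ Submodule.span ℝ RS := by
    intro t htT
    have hmin := hTmin t htT
    have ht0 : t ≠ 0 := fun h => hmin (h ▸ InCone.zero _)
    obtain ⟨a, has, hta⟩ := Finset.mem_image.1 (hTG htT)
    obtain ⟨ε, hε, hεP⟩ := cone_scale_mem_hull s v₀ hv₀s (InCone.gen (hTG htT)) ht0
    set E : Set (Fin n → ℝ) :=
      {p | p ∈ convexHull ℝ (↑s : Set (Fin n → ℝ)) ∧ ∃ c : ℝ, 0 ≤ c ∧ p = v₀ + c • t}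
      with hEdef
    have hv₀E : v₀ ∈ E :=
      ⟨subset_convexHull ℝ _ (Finset.mem_coe.2 hv₀s), 0, le_rfl, by simp⟩
    have hεE : v₀ + ε • t ∈ E := ⟨hεP, ε, hε.le, rfl⟩
    have hEext : IsExtreme ℝ (convexHull ℝ (↑s : Set (Fin n → ℝ))) E := by
      constructor
      · exact fun p hp => hp.1
      · rintro x₁ hx₁ x₂ hx₂ z ⟨hzP, c, hc0, hzval⟩ hseg
        obtain ⟨a', b', ha', hb', hab, habz⟩ := hseg
        have hkey : a' • (x₁ - v₀) + b' • (x₂ - v₀) = c • t := by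
          have h1 : a' • x₁ + b' • x₂ = v₀ + c • t := by rw [habz, hzval]
          have h2 : (a' + b') • v₀ = v₀ := by rw [hab, one_smul]
          linear_combination (norm := module) h1 - h2
        have hc₁ : InCone T (a' • (x₁ - v₀)) :=
          InCone.smul ha'.le ((hTiff _).1 (hull_sub_mem_cone s v₀ hv₀s hx₁))
        have hc₂ : InCone T (b' • (x₂ - v₀)) :=
          InCone.smul hb'.le ((hTiff _).1 (hull_sub_mem_cone s v₀ hv₀s hx₂))
        suffices hboth : x₁ ∈ E ∧ x₂ ∈ E from hboth.1
        constructor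
        · obtain ⟨d, hd0, hd⟩ := minimal_gen_extreme hpointedT htT hmin hc₁ hc₂ hc0 hkey
          refine ⟨hx₁, a'⁻¹ * d, mul_nonneg (inv_nonneg.2 ha'.le) hd0, ?_⟩
          have : x₁ - v₀ = (a'⁻¹ * d) • t := by
            calc x₁ - v₀ = a'⁻¹ • (a' • (x₁ - v₀)) := by
                  rw [smul_smul, inv_mul_cancel₀ ha'.ne', one_smul]
            _ = (a'⁻¹ * d) • t := by rw [hd, smul_smul]
          rw [← this]; abel
        · obtain ⟨d, hd0, hd⟩ := minimal_gen_extreme hpointedT htT hmin hc₂ hc₁ hc0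
            (by rw [add_comm]; exact hkey)
          refine ⟨hx₂, b'⁻¹ * d, mul_nonneg (inv_nonneg.2 hb'.le) hd0, ?_⟩
          have : x₂ - v₀ = (b'⁻¹ * d) • t := by
            calc x₂ - v₀ = b'⁻¹ • (b' • (x₂ - v₀)) := by
                  rw [smul_smul, inv_mul_cancel₀ hb'.ne', one_smul]
            _ = (b'⁻¹ * d) • t := by rw [hd, smul_smul]
          rw [← this]; abel
    have hdir : (affineSpan ℝ E).direction = Submodule.span ℝ {t} := by
      apply le_antisymm
      · have hle : affineSpan ℝ E ≤ AffineSubspace.mk' v₀ (Submodule.span ℝ {t}) := by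
          apply affineSpan_le.2
          rintro p ⟨hpP, c, hc0, rfl⟩
          rw [SetLike.mem_coe, AffineSubspace.mem_mk']
          have : (v₀ + c • t) -ᵥ v₀ = c • t := by
            rw [vsub_eq_sub]; abel
          rw [this]
          exact Submodule.smul_mem _ _ (Submodule.mem_span_singleton_self t)
        have := AffineSubspace.direction_le hle
        rwa [AffineSubspace.direction_mk'] at this
      · rw [Submodule.span_le, Set.singleton_subset_iff]
        have hmem : (v₀ + ε • t) -ᵥ v₀ ∈ (affineSpan ℝ E).direction :=
          AffineSubspace.vsub_mem_direction (subset_affineSpan ℝ E hεE)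
            (subset_affineSpan ℝ E hv₀E)
        have heq : (v₀ + ε • t) -ᵥ v₀ = ε • t := by rw [vsub_eq_sub]; abel
        rw [heq] at hmem
        have := Submodule.smul_mem _ ε⁻¹ hmem
        rwa [smul_smul, inv_mul_cancel₀ hε.ne', one_smul] at this
    have hdim : Module.finrank ℝ (affineSpan ℝ E).direction = 1 := by
      rw [hdir]; exact finrank_span_singleton ht0
    obtain ⟨i, j, hij, hpar⟩ := hEdge E ⟨hEext, hdim⟩
    obtain ⟨c, hc⟩ := hpar _ hεE _ hv₀E
    have hεt : ε • t = c • rootR n i j := by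
      rw [← hc]; abel
    have hc0 : c ≠ 0 := by
      intro h
      apply ht0
      rw [h, zero_smul] at hεt
      rcases smul_eq_zero.1 hεt with h' | h'
      · exact absurd h' hε.ne'
      · exact h'
    have htv : t ∈ vectorSpan ℝ (↑s : Set (Fin n → ℝ)) := by
      have := vsub_mem_vectorSpan ℝ (Finset.mem_coe.2 has) (Finset.mem_coe.2 hv₀s)
      rwa [vsub_eq_sub, hta] at this
    have hroot_in : rootR n i j ∈ vectorSpan ℝ (↑s : Set (Fin n → ℝ)) := by
      have hr : rootR n i j = (c⁻¹ * ε) • t := by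
        rw [mul_smul, hεt, smul_smul, inv_mul_cancel₀ hc0, one_smul]
      rw [hr]
      exact Submodule.smul_mem _ _ htv
    have hRSmem : rootR n i j ∈ RS := ⟨⟨i, j, hij, rfl⟩, hroot_in⟩
    have ht_eq : t = (ε⁻¹ * c) • rootR n i j := by
      rw [mul_smul, ← hεt, smul_smul, inv_mul_cancel₀ hε.ne', one_smul]
    rw [ht_eq]
    exact Submodule.smul_mem _ _ (Submodule.subset_span hRSmem)
  rw [vectorSpan_eq_span_vsub_set_right ℝ (Finset.mem_coe.2 hv₀s), Submodule.span_le]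
  rintro x ⟨a, has, rfl⟩
  obtain ⟨f, hf, hval⟩ := (hTiff _).1 (InCone.gen (Finset.mem_image_of_mem _ (Finset.mem_coe.1 has)))
  have heq : (fun x => x -ᵥ v₀) a = a - v₀ := vsub_eq_sub _ _
  simp only [SetLike.mem_coe]
  rw [show (a : Fin n → ℝ) -ᵥ v₀ = a - v₀ from vsub_eq_sub _ _, hval]
  exact Submodule.sum_mem _ fun t ht => Submodule.smul_mem _ _ (hTspan t ht)

end Main

section Lattice
variable {n : ℕ}

lemma root_apply_cases {i j : Fin n} (hij : i ≠ j) (k : Fin n) :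
    (k = i ∧ rootR n i j k = 1) ∨ (k = j ∧ rootR n i j k = -1) ∨
      (k ≠ i ∧ k ≠ j ∧ rootR n i j k = 0) := by
  unfold rootR
  by_cases h1 : k = i
  · subst h1; left; simp [hij]
  · by_cases h2 : k = j
    · subst h2; right; left; simp [h1]
    · right; right; exact ⟨h1, h2, by simp [h1, h2]⟩

lemma root_support {i j : Fin n} (hij : i ≠ j) :
    Finset.univ.filter (fun k => rootR n i j k ≠ 0) = {i, j} := by
  ext k
  simp only [Finset.mem_filter, Finset.mem_univ, true_and, Finset.mem_insert,
    Finset.mem_singleton]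
  rcases root_apply_cases hij k with ⟨h, hv⟩ | ⟨h, hv⟩ | ⟨h1, h2, hv⟩
  · subst h; simp [hv]
  · subst h; simp [hv]
  · simp [hv, h1, h2]

lemma root_sum {i j : Fin n} (hij : i ≠ j) : ∑ k, rootR n i j k = 0 := by
  unfold rootR
  rw [Finset.sum_sub_distrib]
  simp

/-- a linearly independent family of roots (a forest) has a leaf -/
lemma exists_leaf (Tf : Finset (Fin n → ℝ)) (hne : Tf.Nonempty)
    (hroot : ∀ r ∈ Tf, ∃ i j, i ≠ j ∧ r = rootR n i j)
    (hind : LinearIndependent ℝ (fun x : (Tf : Set (Fin n → ℝ)) => (x : Fin n → ℝ))) :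
    ∃ r₀ ∈ Tf, ∃ i : Fin n, r₀ i ≠ 0 ∧ ∀ r ∈ Tf, r ≠ r₀ → r i = 0 := by
  classical
  set Vset := Finset.univ.filter (fun i : Fin n => ∃ r ∈ Tf, r i ≠ 0) with hVdef
  clear_value Vset
  have hVmem : ∀ (i : Fin n) (r : Fin n → ℝ), r ∈ Tf → r i ≠ 0 → i ∈ Vset := by
    intro i r hr hri
    rw [hVdef, Finset.mem_filter]
    exact ⟨Finset.mem_univ _, r, hr, hri⟩
  -- double counting
  have hcount : ∑ i ∈ Vset, (Tf.filter (fun r => r i ≠ 0)).card = 2 * Tf.card := by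
    have h1 : ∀ i, (Tf.filter (fun r => r i ≠ 0)).card
        = ∑ r ∈ Tf, (if r i ≠ 0 then 1 else 0) := fun i => Finset.card_filter _ _
    rw [Finset.sum_congr rfl fun i _ => h1 i, Finset.sum_comm]
    have h2 : ∀ r ∈ Tf, ∑ i ∈ Vset, (if r i ≠ 0 then 1 else 0) = 2 := by
      intro r hr
      obtain ⟨i, j, hij, rfl⟩ := hroot r hr
      have : ∑ i_1 ∈ Vset, (if rootR n i j i_1 ≠ 0 then 1 else 0)
          = (Vset.filter (fun k => rootR n i j k ≠ 0)).card := (Finset.card_filter _ _).symm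
      rw [this]
      have : Vset.filter (fun k => rootR n i j k ≠ 0)
          = Finset.univ.filter (fun k => rootR n i j k ≠ 0) := by
        ext k
        simp only [Finset.mem_filter, Finset.mem_univ, true_and, and_iff_right_iff_imp]
        exact fun hk => hVmem k _ hr hk
      rw [this, root_support hij]
      rw [Finset.card_insert_of_notMem (by simp [hij]), Finset.card_singleton]
    rw [Finset.sum_congr rfl h2, Finset.sum_const, smul_eq_mul, mul_comm]
  -- rank bound
  obtain ⟨r₀', hr₀'⟩ := hne
  obtain ⟨i', j', hij', hr₀eq⟩ := hroot r₀' hr₀'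
  have hi'V : i' ∈ Vset := hVmem i' r₀' hr₀' (by
    rcases root_apply_cases hij' i' with ⟨_, hv⟩ | ⟨hji, _⟩ | ⟨h1, _, _⟩
    · rw [hr₀eq, hv]; norm_num
    · exact absurd hji hij'
    · exact absurd rfl h1)
  have hspan_prop : ∀ x ∈ Submodule.span ℝ (Tf : Set (Fin n → ℝ)),
      (∀ m, m ∉ Vset → x m = 0) ∧ ∑ m, x m = 0 := by
    intro x hx
    induction hx using Submodule.span_induction with
    | mem r hr =>
      refine ⟨fun m hm => ?_, ?_⟩
      · by_contra h
        exact hm (hVmem m r hr h)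
      · obtain ⟨i, j, hij, rfl⟩ := hroot r hr
        exact root_sum hij
    | zero => exact ⟨fun m _ => rfl, by simp⟩
    | add x y _ _ hx hy =>
      refine ⟨fun m hm => ?_, ?_⟩
      · simp only [Pi.add_apply, hx.1 m hm, hy.1 m hm, add_zero]
      · simp only [Pi.add_apply, Finset.sum_add_distrib, hx.2, hy.2, add_zero]
    | smul a x _ hx =>
      refine ⟨fun m hm => ?_, ?_⟩
      · simp only [Pi.smul_apply, hx.1 m hm, smul_zero]
      · simp only [Pi.smul_apply, smul_eq_mul, ← Finset.mul_sum, hx.2, mul_zero]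
  -- injection into functions on Vset.erase i'
  let φ : Submodule.span ℝ (Tf : Set (Fin n → ℝ)) →ₗ[ℝ]
      ((Vset.erase i') → ℝ) :=
    { toFun := fun x k => (x : Fin n → ℝ) k.1
      map_add' := fun x y => rfl
      map_smul' := fun a x => rfl }
  have hφinj : Function.Injective φ := by
    intro x y hxy
    have hdiff : ∀ k : Vset.erase i', ((x : Fin n → ℝ) - y) k.1 = 0 := by
      intro k
      have := congrFun hxy k
      simpa [φ, sub_eq_zero] using this
    have hx := hspan_prop _ x.2
    have hy := hspan_prop _ y.2
    set d : Fin n → ℝ := (x : Fin n → ℝ) - (y : Fin n → ℝ) with hd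
    have hd1 : ∀ m, m ∉ Vset → d m = 0 := fun m hm => by
      simp [hd, hx.1 m hm, hy.1 m hm]
    have hd2 : ∑ m, d m = 0 := by
      simp only [hd, Pi.sub_apply, Finset.sum_sub_distrib, hx.2, hy.2, sub_zero]
    have hdm : ∀ m, m ≠ i' → d m = 0 := by
      intro m hmi
      by_cases hmV : m ∈ Vset
      · exact hdiff ⟨m, Finset.mem_erase.2 ⟨hmi, hmV⟩⟩
      · exact hd1 m hmV
    have hdi' : d i' = 0 := by
      rw [← hd2, Finset.sum_eq_single i' (fun m _ hm => hdm m hm) (by simp)]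
    have : d = 0 := by
      funext m
      by_cases hm : m = i'
      · rw [hm]; exact hdi'
      · exact hdm m hm
    have := sub_eq_zero.1 (by rw [← hd]; exact this)
    exact Subtype.ext this
  have hrank : Tf.card + 1 ≤ Vset.card := by
    have h1 : Module.finrank ℝ (Submodule.span ℝ (Tf : Set (Fin n → ℝ))) = Tf.card :=
      finrank_span_finset_eq_card hind
    have h2 : Module.finrank ℝ (Submodule.span ℝ (Tf : Set (Fin n → ℝ)))
        ≤ Module.finrank ℝ ((Vset.erase i') → ℝ) :=
      LinearMap.finrank_le_finrank_of_injective hφinj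
    have h3 : Module.finrank ℝ (((Vset.erase i') : Finset (Fin n)) → ℝ)
        = (Vset.erase i').card := by
      rw [Module.finrank_pi, Fintype.card_coe]
    rw [h1, h3, Finset.card_erase_of_mem hi'V] at h2
    have hV1 : 1 ≤ Vset.card := Finset.card_pos.2 ⟨i', hi'V⟩
    exact (Nat.le_sub_iff_add_le hV1).1 h2
  -- conclude
  by_contra hno
  push_neg at hno
  have hdeg : ∀ i ∈ Vset, 2 ≤ (Tf.filter (fun r => r i ≠ 0)).card := by
    intro i hi
    rw [hVdef, Finset.mem_filter] at hi
    obtain ⟨-, r, hr, hri⟩ := hi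
    have hpos : 0 < (Tf.filter (fun r => r i ≠ 0)).card :=
      Finset.card_pos.2 ⟨r, Finset.mem_filter.2 ⟨hr, hri⟩⟩
    rcases Nat.lt_or_ge (Tf.filter (fun r => r i ≠ 0)).card 2 with h | h
    · exfalso
      have hcard : (Tf.filter (fun r => r i ≠ 0)).card = 1 :=
        Nat.le_antisymm (Nat.lt_succ_iff.mp h) hpos
      obtain ⟨r₀, hr₀⟩ := Finset.card_eq_one.1 hcard
      have hr₀mem : r₀ ∈ Tf.filter (fun r => r i ≠ 0) := hr₀ ▸ Finset.mem_singleton_self r₀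
      rw [Finset.mem_filter] at hr₀mem
      obtain ⟨r', hr', hne', hri'⟩ := hno r₀ hr₀mem.1 i hr₀mem.2
      have : r' ∈ Tf.filter (fun r => r i ≠ 0) := Finset.mem_filter.2 ⟨hr', hri'⟩
      rw [hr₀, Finset.mem_singleton] at this
      exact hne' this
    · exact h
  have : 2 * Vset.card ≤ 2 * Tf.card := by
    rw [← hcount]
    calc 2 * Vset.card = ∑ _i ∈ Vset, 2 := by rw [Finset.sum_const, smul_eq_mul, mul_comm]
    _ ≤ ∑ i ∈ Vset, (Tf.filter (fun r => r i ≠ 0)).card := Finset.sum_le_sum hdeg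
  have h1 : Vset.card ≤ Tf.card := Nat.le_of_mul_le_mul_left this two_pos
  exact Nat.not_succ_le_self Tf.card (le_trans hrank h1)

end Lattice

section IntCoeff
variable {n : ℕ}

lemma root_coords_int {i j : Fin n} (hij : i ≠ j) (k : Fin n) :
    ∃ m : ℤ, rootR n i j k = (m : ℝ) := by
  rcases root_apply_cases hij k with ⟨_, hv⟩ | ⟨_, hv⟩ | ⟨_, _, hv⟩
  · exact ⟨1, by rw [hv]; norm_num⟩
  · exact ⟨-1, by rw [hv]; norm_num⟩
  · exact ⟨0, by rw [hv]; norm_num⟩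

lemma int_coeffs : ∀ Tf : Finset (Fin n → ℝ),
    (∀ r ∈ Tf, ∃ i j, i ≠ j ∧ r = rootR n i j) →
    LinearIndependent ℝ (fun x : (Tf : Set (Fin n → ℝ)) => (x : Fin n → ℝ)) →
    ∀ c : Fin n → ℝ, (∀ k, ∃ m : ℤ, c k = (m : ℝ)) →
    c ∈ Submodule.span ℝ (Tf : Set (Fin n → ℝ)) →
    ∃ m : (Fin n → ℝ) → ℤ, c = ∑ r ∈ Tf, (m r : ℝ) • r := by
  classical
  intro Tf
  induction Tf using Finset.strongInduction with
  | _ Tf ih =>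
    intro hroot hind c hc hmem
    rcases Tf.eq_empty_or_nonempty with rfl | hne
    · rw [Finset.coe_empty, Submodule.span_empty, Submodule.mem_bot] at hmem
      exact ⟨0, by simp [hmem]⟩
    · obtain ⟨r₀, hr₀Tf, i, hr₀i, hleaf⟩ := exists_leaf Tf hne hroot hind
      obtain ⟨f, -, hf⟩ := Submodule.mem_span_finset.1 hmem
      have hci : c i = f r₀ * r₀ i := by
        rw [← hf, Finset.sum_apply]
        rw [Finset.sum_eq_single r₀]
        · simp
        · intro r hr hner
          have := hleaf r hr hner
          simp [this]
        · intro h; exact absurd hr₀Tf h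
      obtain ⟨i', j', hij', hr₀eq⟩ := hroot r₀ hr₀Tf
      have hval : r₀ i = 1 ∨ r₀ i = -1 := by
        rw [hr₀eq] at hr₀i ⊢
        rcases root_apply_cases hij' i with ⟨_, hv⟩ | ⟨_, hv⟩ | ⟨_, _, hv⟩
        · exact Or.inl hv
        · exact Or.inr hv
        · exact absurd hv hr₀i
      obtain ⟨mi, hmi⟩ := hc i
      set m₀ : ℤ := if r₀ i = 1 then mi else -mi with hm₀def
      have hfr₀ : f r₀ = (m₀ : ℝ) := by
        rcases hval with h | h
        · rw [hm₀def, if_pos h]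
          rw [h, mul_one] at hci
          rw [← hci, hmi]
        · have h1 : r₀ i ≠ 1 := by rw [h]; norm_num
          rw [hm₀def, if_neg h1]
          rw [h] at hci
          push_cast
          linarith [hci, hmi]
      set c' : Fin n → ℝ := c - (m₀ : ℝ) • r₀ with hc'def
      have hsum_erase : ∑ r ∈ Tf.erase r₀, f r • r = c' := by
        have h := Finset.sum_erase_add Tf (fun r => f r • r) hr₀Tf
        simp only [hf] at h
        rw [hc'def, ← h, hfr₀]
        abel
      have hc'mem : c' ∈ Submodule.span ℝ ((Tf.erase r₀ : Finset (Fin n → ℝ)) : Set (Fin n → ℝ)) := by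
        rw [← hsum_erase]
        exact Submodule.sum_mem _ fun r hr =>
          Submodule.smul_mem _ _ (Submodule.subset_span (Finset.mem_coe.2 hr))
      have hc' : ∀ k, ∃ m : ℤ, c' k = (m : ℝ) := by
        intro k
        obtain ⟨mk, hmk⟩ := hc k
        obtain ⟨mr, hmr⟩ : ∃ mr : ℤ, r₀ k = (mr : ℝ) := by
          rw [hr₀eq]; exact root_coords_int hij' k
        refine ⟨mk - m₀ * mr, ?_⟩
        rw [hc'def]
        simp only [Pi.sub_apply, Pi.smul_apply, smul_eq_mul, hmk, hmr]
        push_cast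
        ring
      obtain ⟨m', hm'⟩ := ih (Tf.erase r₀) (Finset.erase_ssubset hr₀Tf)
        (fun r hr => hroot r (Finset.mem_of_mem_erase hr))
        (LinearIndepOn.mono (v := id) hind (Finset.coe_subset.2 (Finset.erase_subset _ _)))
        c' hc' hc'mem
      refine ⟨fun r => if r = r₀ then m₀ else m' r, ?_⟩
      rw [← Finset.sum_erase_add Tf _ hr₀Tf]
      have h1 : ∑ r ∈ Tf.erase r₀, ((if r = r₀ then m₀ else m' r : ℤ) : ℝ) • r
          = ∑ r ∈ Tf.erase r₀, ((m' r : ℤ) : ℝ) • r := by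
        refine Finset.sum_congr rfl fun r hr => ?_
        rw [if_neg (Finset.ne_of_mem_erase hr)]
      rw [h1, ← hm']
      simp [hc'def]

end IntCoeff

section Assemble
variable {n : ℕ}

lemma coeZ_rootZ (i j : Fin n) : coeZ (rootZ n i j) = rootR n i j := by
  funext k
  simp [coeZ, rootZ, rootR, apply_ite (fun z : ℤ => (z : ℝ))]

lemma rootZ_sum {i j : Fin n} (hij : i ≠ j) : ∑ k, rootZ n i j k = 0 := by
  unfold rootZ
  rw [Finset.sum_sub_distrib]
  simp

/-- an integer combination of roots is an integral sum-zero vector -/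
lemma int_comb_integral (S : Finset (Fin n → ℝ))
    (hroot : ∀ r ∈ S, ∃ i j, i ≠ j ∧ r = rootR n i j) (m : (Fin n → ℝ) → ℤ) :
    ∃ v : Fin n → ℤ, (∑ i, v i = 0) ∧ coeZ v = ∑ r ∈ S, (m r : ℝ) • r := by
  classical
  induction S using Finset.induction with
  | empty => exact ⟨0, by simp, by funext k; simp [coeZ]⟩
  | insert r S hnotmem ih =>
    obtain ⟨v', hv'sum, hv'⟩ := ih (fun r' hr' => hroot r' (Finset.mem_insert_of_mem hr'))
    obtain ⟨i, j, hij, hreq⟩ := hroot r (Finset.mem_insert_self _ _)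
    refine ⟨m r • rootZ n i j + v', ?_, ?_⟩
    · simp only [Pi.add_apply, Pi.smul_apply, Finset.sum_add_distrib, hv'sum, add_zero,
        smul_eq_mul]
      rw [← Finset.mul_sum, rootZ_sum hij, mul_zero]
    · rw [Finset.sum_insert hnotmem, ← hv', hreq]
      funext k
      have hk := congrFun (coeZ_rootZ i j) k
      simp only [coeZ, Pi.add_apply, Pi.smul_apply, smul_eq_mul] at hk ⊢
      rw [← hk]
      push_cast
      ring


/-- if the affine hulls of the convex hulls of two root-saturated
sets meet in a single point `z₀`, then `z₀` lies in the root lattice. -/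
theorem affine_hulls_single_intersection_point_is_integral (n : ℕ)
    (A B : Finset (Fin n → ℤ)) (hA : RootSaturated A) (hB : RootSaturated B)
    (z₀ : Fin n → ℝ)
    (hint : (affineSpan ℝ (coeZ '' (A : Set (Fin n → ℤ))) : Set (Fin n → ℝ)) ∩
        (affineSpan ℝ (coeZ '' (B : Set (Fin n → ℤ))) : Set (Fin n → ℝ)) = {z₀}) :
    ∃ v : Fin n → ℤ, (∑ i, v i = 0) ∧ coeZ v = z₀ := by
  classical
  -- z₀ is in both affine spans
  have hz : z₀ ∈ ({z₀} : Set (Fin n → ℝ)) := rfl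
  rw [← hint] at hz
  obtain ⟨hzA, hzB⟩ := hz
  -- Finset images
  set sA : Finset (Fin n → ℝ) := A.image coeZ with hsAdef
  set sB : Finset (Fin n → ℝ) := B.image coeZ with hsBdef
  have hcA : (sA : Set (Fin n → ℝ)) = coeZ '' (A : Set (Fin n → ℤ)) := Finset.coe_image
  have hcB : (sB : Set (Fin n → ℝ)) = coeZ '' (B : Set (Fin n → ℤ)) := Finset.coe_image
  -- directions
  set DA : Submodule ℝ (Fin n → ℝ) := vectorSpan ℝ (coeZ '' (A : Set (Fin n → ℤ))) with hDAdef
  set DB : Submodule ℝ (Fin n → ℝ) := vectorSpan ℝ (coeZ '' (B : Set (Fin n → ℤ))) with hDBdef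
  -- base points
  have hAne : A.Nonempty := by
    rcases A.eq_empty_or_nonempty with rfl | h
    · exfalso
      simp only [Finset.coe_empty, Set.image_empty] at hzA
      rw [AffineSubspace.span_empty] at hzA
      exact hzA
    · exact h
  have hBne : B.Nonempty := by
    rcases B.eq_empty_or_nonempty with rfl | h
    · exfalso
      simp only [Finset.coe_empty, Set.image_empty] at hzB
      rw [AffineSubspace.span_empty] at hzB
      exact hzB
    · exact h
  obtain ⟨a, haA⟩ := hAne
  obtain ⟨b, hbB⟩ := hBne
  have haS : coeZ a ∈ coeZ '' (A : Set (Fin n → ℤ)) := ⟨a, haA, rfl⟩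
  have hbS : coeZ b ∈ coeZ '' (B : Set (Fin n → ℤ)) := ⟨b, hbB, rfl⟩
  -- u and w
  set u : Fin n → ℝ := z₀ - coeZ a with hudef
  set w : Fin n → ℝ := z₀ - coeZ b with hwdef
  have huDA : u ∈ DA := by
    have := AffineSubspace.vsub_mem_direction hzA (mem_affineSpan ℝ haS)
    rwa [direction_affineSpan] at this
  have hwDB : w ∈ DB := by
    have := AffineSubspace.vsub_mem_direction hzB (mem_affineSpan ℝ hbS)
    rwa [direction_affineSpan] at this
  -- trivial intersection of directions
  have hDAB : ∀ v : Fin n → ℝ, v ∈ DA → v ∈ DB → v = 0 := by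
    intro v hvA hvB
    have h1 : v +ᵥ z₀ ∈ (affineSpan ℝ (coeZ '' (A : Set (Fin n → ℤ))) : Set (Fin n → ℝ)) :=
      AffineSubspace.vadd_mem_of_mem_direction (by rwa [direction_affineSpan]) hzA
    have h2 : v +ᵥ z₀ ∈ (affineSpan ℝ (coeZ '' (B : Set (Fin n → ℤ))) : Set (Fin n → ℝ)) :=
      AffineSubspace.vadd_mem_of_mem_direction (by rwa [direction_affineSpan]) hzB
    have : v +ᵥ z₀ ∈ ({z₀} : Set (Fin n → ℝ)) := hint ▸ Set.mem_inter h1 h2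
    have hvz : v +ᵥ z₀ = z₀ := this
    have : v + z₀ = z₀ := hvz
    exact by linear_combination (norm := module) this
  -- root sets
  set RSA : Set (Fin n → ℝ) := {r : Fin n → ℝ | (∃ i j, i ≠ j ∧ r = rootR n i j) ∧
      r ∈ vectorSpan ℝ ((sA : Set (Fin n → ℝ)))} with hRSAdef
  set RSB : Set (Fin n → ℝ) := {r : Fin n → ℝ | (∃ i j, i ≠ j ∧ r = rootR n i j) ∧
      r ∈ vectorSpan ℝ ((sB : Set (Fin n → ℝ)))} with hRSBdef
  have hspanA : DA ≤ Submodule.span ℝ RSA := by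
    rw [hDAdef, ← hcA]
    exact vectorSpan_le_span_roots sA (by rw [hcA]; exact hA.2.1)
  have hspanB : DB ≤ Submodule.span ℝ RSB := by
    rw [hDBdef, ← hcB]
    exact vectorSpan_le_span_roots sB (by rw [hcB]; exact hB.2.1)
  have hRSA_sub : RSA ⊆ (DA : Set (Fin n → ℝ)) := by
    rintro r ⟨-, hr⟩; rw [hDAdef, ← hcA]; exact hr
  have hRSB_sub : RSB ⊆ (DB : Set (Fin n → ℝ)) := by
    rintro r ⟨-, hr⟩; rw [hDBdef, ← hcB]; exact hr
  -- independent spanning subsets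
  obtain ⟨TA, hTAsub, hTAspan, hTAind⟩ := exists_linearIndependent ℝ RSA
  obtain ⟨TB, hTBsub, hTBspan, hTBind⟩ := exists_linearIndependent ℝ RSB
  have hTA_DA : Submodule.span ℝ TA ≤ DA := by
    rw [Submodule.span_le]
    exact fun r hr => hRSA_sub (hTAsub hr)
  have hTB_DB : Submodule.span ℝ TB ≤ DB := by
    rw [Submodule.span_le]
    exact fun r hr => hRSB_sub (hTBsub hr)
  -- finiteness
  have hrootsfin : ({r : Fin n → ℝ | ∃ i j, i ≠ j ∧ r = rootR n i j}).Finite := by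
    apply Set.Finite.subset (Set.finite_range (fun p : Fin n × Fin n => rootR n p.1 p.2))
    rintro r ⟨i, j, -, rfl⟩
    exact ⟨(i, j), rfl⟩
  have hTAfin : TA.Finite := hrootsfin.subset (fun r hr => (hTAsub hr).1)
  have hTBfin : TB.Finite := hrootsfin.subset (fun r hr => (hTBsub hr).1)
  set TfA : Finset (Fin n → ℝ) := hTAfin.toFinset with hTfAdef
  set TfB : Finset (Fin n → ℝ) := hTBfin.toFinset with hTfBdef
  have hTfAcoe : (TfA : Set (Fin n → ℝ)) = TA := hTAfin.coe_toFinset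
  have hTfBcoe : (TfB : Set (Fin n → ℝ)) = TB := hTBfin.coe_toFinset
  -- disjointness
  have hdisj : Disjoint TfA TfB := by
    rw [Finset.disjoint_left]
    intro r hrA hrB
    have h1 : r ∈ TA := by rw [← hTfAcoe]; exact hrA
    have h2 : r ∈ TB := by rw [← hTfBcoe]; exact hrB
    have hr0 : r = 0 := hDAB r (hTA_DA (Submodule.subset_span h1))
      (hTB_DB (Submodule.subset_span h2))
    obtain ⟨i, j, hij, hreq⟩ := (hTAsub h1).1
    have : rootR n i j i = 0 := by rw [← hreq, hr0]; rfl
    unfold rootR at this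
    simp [hij] at this
  -- union independence
  have hspan_disj : Disjoint (Submodule.span ℝ TA) (Submodule.span ℝ TB) := by
    rw [disjoint_iff]
    rw [eq_bot_iff]
    intro v hv
    rw [Submodule.mem_bot]
    exact hDAB v (hTA_DA hv.1) (hTB_DB hv.2)
  have hindU := LinearIndepOn.union (R := ℝ) (v := id) (s := TA) (t := TB) hTAind hTBind
    (by rwa [Set.image_id, Set.image_id])
  set TfU : Finset (Fin n → ℝ) := TfA ∪ TfB with hTfUdef
  have hTfUcoe : (TfU : Set (Fin n → ℝ)) = TA ∪ TB := by
    rw [hTfUdef, Finset.coe_union, hTfAcoe, hTfBcoe]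
  have hindU' : LinearIndependent ℝ
      (fun x : (TfU : Set (Fin n → ℝ)) => (x : Fin n → ℝ)) := by
    rw [hTfUcoe]
    exact hindU
  have hrootU : ∀ r ∈ TfU, ∃ i j, i ≠ j ∧ r = rootR n i j := by
    intro r hr
    rcases Finset.mem_union.1 hr with h | h
    · exact (hTAsub (by rw [← hTfAcoe]; exact h)).1
    · exact (hTBsub (by rw [← hTfBcoe]; exact h)).1
  -- c = u - w
  set c : Fin n → ℝ := u - w with hcdef
  have hcint : ∀ k, ∃ m : ℤ, c k = (m : ℝ) := by
    intro k
    refine ⟨b k - a k, ?_⟩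
    rw [hcdef, hudef, hwdef]
    simp [coeZ]
  have hcmem : c ∈ Submodule.span ℝ (TfU : Set (Fin n → ℝ)) := by
    rw [hTfUcoe, Submodule.span_union]
    have h1 : u ∈ Submodule.span ℝ TA := by rw [hTAspan]; exact hspanA huDA
    have h2 : w ∈ Submodule.span ℝ TB := by rw [hTBspan]; exact hspanB hwDB
    rw [hcdef, sub_eq_add_neg]
    exact Submodule.add_mem _ (Submodule.mem_sup_left h1)
      (Submodule.mem_sup_right (Submodule.neg_mem _ h2))
  obtain ⟨m, hm⟩ := int_coeffs TfU hrootU hindU' c hcint hcmem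
  -- split the sum
  have hsplit : c = (∑ r ∈ TfA, (m r : ℝ) • r) + (∑ r ∈ TfB, (m r : ℝ) • r) := by
    rw [hm, hTfUdef, Finset.sum_union hdisj]
  set u' : Fin n → ℝ := ∑ r ∈ TfA, (m r : ℝ) • r with hu'def
  have hu'TA : u' ∈ Submodule.span ℝ TA :=
    Submodule.sum_mem _ fun r hr => Submodule.smul_mem _ _
      (Submodule.subset_span (by rw [← hTfAcoe]; exact hr))
  have hw'TB : (∑ r ∈ TfB, (m r : ℝ) • r) ∈ Submodule.span ℝ TB :=
    Submodule.sum_mem _ fun r hr => Submodule.smul_mem _ _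
      (Submodule.subset_span (by rw [← hTfBcoe]; exact hr))
  -- u = u'
  have huu' : u = u' := by
    have hqA : u - u' ∈ DA := Submodule.sub_mem _ huDA (hTA_DA hu'TA)
    have hqB : u - u' ∈ DB := by
      have : u - u' = w + (∑ r ∈ TfB, (m r : ℝ) • r) := by
        have h' : u - w = u' + ∑ r ∈ TfB, (m r : ℝ) • r := by rw [← hcdef]; exact hsplit
        linear_combination (norm := module) h'
      rw [this]
      exact Submodule.add_mem _ hwDB (hTB_DB hw'TB)
    have := hDAB _ hqA hqB
    linear_combination (norm := module) this
  -- integrality of u'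
  obtain ⟨vu, hvusum, hvu⟩ := int_comb_integral TfA
    (fun r hr => (hTAsub (by rw [← hTfAcoe]; exact hr)).1) m
  refine ⟨a + vu, ?_, ?_⟩
  · simp only [Pi.add_apply, Finset.sum_add_distrib, hA.1 a haA, hvusum, add_zero]
  · have : coeZ (a + vu) = coeZ a + coeZ vu := by
      funext k; simp [coeZ]
    rw [this, hvu, ← hu'def, ← huu', hudef]
    abel

end Assemble
end

section
/- Let d ≥ 1 and let A ⊂ Z^n be a set of 0/1 vectors each with exactly k ones (bases of a matroid), so conv(A) is a matroid polytope. Then for every positive integer N, the lattice points of N·conv(A) with coordinate sum Nk that lie in the N-fold Minkowski sum cone are exactly the N-fold sums of elements of A; i.e., (N·conv(A)) ∩ {v ∈ Z^n_{≥0} : Σ v_i = Nk} = A + A + ... + A (N times). -/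
open Finset Pointwise

/- ## Auxiliary development -/

section Core
variable {n : ℕ} (B : Finset (Finset (Fin n)))

/-- rank of a set: max intersection with a basis -/
def rkN (S : Finset (Fin n)) : ℕ := B.sup fun B' => (B' ∩ S).card

def Indep (I : Finset (Fin n)) : Prop := ∃ B' ∈ B, I ⊆ B'

variable {B}

lemma card_inter_le_rkN {B' : Finset (Fin n)} (h : B' ∈ B) (S : Finset (Fin n)) :
    (B' ∩ S).card ≤ rkN B S := Finset.le_sup (f := fun B' => (B' ∩ S).card) h

lemma rkN_le {S : Finset (Fin n)} {m : ℕ} (h : ∀ B' ∈ B, (B' ∩ S).card ≤ m) :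
    rkN B S ≤ m := Finset.sup_le h

lemma exists_rkN (hne : B.Nonempty) (S : Finset (Fin n)) :
    ∃ B' ∈ B, (B' ∩ S).card = rkN B S := by
  obtain ⟨B', hB', h⟩ := Finset.exists_mem_eq_sup B hne (fun B' => (B' ∩ S).card)
  exact ⟨B', hB', h.symm⟩

lemma rkN_mono {S T : Finset (Fin n)} (h : S ⊆ T) : rkN B S ≤ rkN B T :=
  rkN_le fun B' hB' => le_trans (Finset.card_le_card (by gcongr)) (card_inter_le_rkN hB' T)

lemma rkN_le_card (S : Finset (Fin n)) : rkN B S ≤ S.card :=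
  rkN_le fun B' _ => Finset.card_le_card inter_subset_right

lemma indep_card_le_rkN {I S : Finset (Fin n)} (hI : Indep B I) (hIS : I ⊆ S) :
    I.card ≤ rkN B S := by
  obtain ⟨B', hB', hIB⟩ := hI
  calc I.card ≤ (B' ∩ S).card := Finset.card_le_card (Finset.subset_inter hIB hIS)
    _ ≤ rkN B S := card_inter_le_rkN hB' S

lemma indep_of_rkN_eq (hne : B.Nonempty) {I : Finset (Fin n)} (h : rkN B I = I.card) :
    Indep B I := by
  obtain ⟨B', hB', hc⟩ := exists_rkN hne I
  refine ⟨B', hB', ?_⟩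
  have : B' ∩ I = I := Finset.eq_of_subset_of_card_le inter_subset_right (by omega)
  exact this ▸ inter_subset_left

lemma rkN_eq_of_indep {I : Finset (Fin n)} (h : Indep B I) : rkN B I = I.card :=
  le_antisymm (rkN_le_card I) (indep_card_le_rkN h (subset_refl I))

/-- The augmentation property, derived from basis exchange. -/
lemma augmentation (hB : IsMatroidBases B) {k : ℕ} (hcard : ∀ S ∈ B, S.card = k)
    {I₁ I₂ : Finset (Fin n)} (h₁ : Indep B I₁) (h₂ : Indep B I₂)
    (hlt : I₁.card < I₂.card) : ∃ y ∈ I₂, y ∉ I₁ ∧ Indep B (insert y I₁) := by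
  obtain ⟨B₂, hB₂, hI₂⟩ := h₂
  -- choose a basis containing I₁ minimizing |B' \ (I₁ ∪ B₂)|
  have hne : (B.filter fun B' => I₁ ⊆ B').Nonempty := by
    obtain ⟨B₁, hB₁, hI₁⟩ := h₁
    exact ⟨B₁, by simp [hB₁, hI₁]⟩
  obtain ⟨B₁, hB₁mem, hmin⟩ := Finset.exists_min_image _ (fun B' => (B' \ (I₁ ∪ B₂)).card) hne
  rw [Finset.mem_filter] at hB₁mem
  obtain ⟨hB₁, hI₁⟩ := hB₁mem
  -- B₁ ⊆ I₁ ∪ B₂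
  have hsub : B₁ ⊆ I₁ ∪ B₂ := by
    by_contra hc
    obtain ⟨x, hxB₁, hx⟩ := Finset.not_subset.mp hc
    have hxB₂ : x ∉ B₂ := fun h => hx (Finset.mem_union_right _ h)
    obtain ⟨y, hy, hex⟩ := hB.2 B₁ hB₁ B₂ hB₂ x (Finset.mem_sdiff.mpr ⟨hxB₁, hxB₂⟩)
    rw [Finset.mem_sdiff] at hy
    have hxI₁ : x ∉ I₁ := fun h => hx (Finset.mem_union_left _ h)
    have h1 : I₁ ⊆ insert y (B₁.erase x) := fun a ha =>
      Finset.mem_insert_of_mem (Finset.mem_erase.mpr ⟨fun he => hxI₁ (he ▸ ha), hI₁ ha⟩)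
    have hlt2 : ((insert y (B₁.erase x)) \ (I₁ ∪ B₂)).card < (B₁ \ (I₁ ∪ B₂)).card := by
      apply Finset.card_lt_card
      constructor
      · intro a ha
        rw [Finset.mem_sdiff, Finset.mem_insert] at ha
        obtain ⟨h' | h', ha2⟩ := ha
        · exact absurd (Finset.mem_union_right _ (h' ▸ hy.1)) ha2
        · exact Finset.mem_sdiff.mpr ⟨Finset.mem_of_mem_erase h', ha2⟩
      · intro hcon
        have : x ∈ (insert y (B₁.erase x)) \ (I₁ ∪ B₂) :=
          hcon (Finset.mem_sdiff.mpr ⟨hxB₁, hx⟩)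
        rw [Finset.mem_sdiff, Finset.mem_insert] at this
        rcases this.1 with h' | h'
        · exact hy.2 (h' ▸ hxB₁)
        · exact (Finset.mem_erase.mp h').1 rfl
    exact absurd (hmin _ (Finset.mem_filter.mpr ⟨hex, h1⟩)) (not_le.mpr hlt2)
  -- find the augmenting element
  by_cases hy : ∃ y ∈ I₂, y ∉ I₁ ∧ y ∈ B₁
  · obtain ⟨y, hy2, hy1, hyB⟩ := hy
    exact ⟨y, hy2, hy1, B₁, hB₁, Finset.insert_subset hyB hI₁⟩
  · exfalso
    push_neg at hy
    have hsub2 : B₁ ⊆ I₁ ∪ (B₂ \ I₂) := by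
      intro b hb
      rcases Finset.mem_union.mp (hsub hb) with h' | h'
      · exact Finset.mem_union_left _ h'
      · by_cases hbI₁ : b ∈ I₁
        · exact Finset.mem_union_left _ hbI₁
        · refine Finset.mem_union_right _ (Finset.mem_sdiff.mpr ⟨h', fun hbI₂ => ?_⟩)
          exact (hy b hbI₂ hbI₁) hb
    have h1 : B₁.card ≤ I₁.card + (B₂.card - I₂.card) := by
      calc B₁.card ≤ (I₁ ∪ (B₂ \ I₂)).card := Finset.card_le_card hsub2
        _ ≤ I₁.card + (B₂ \ I₂).card := Finset.card_union_le _ _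
        _ = I₁.card + (B₂.card - I₂.card) := by rw [Finset.card_sdiff_of_subset hI₂]
    have e1 : B₁.card = k := hcard _ hB₁
    have e2 : B₂.card = k := hcard _ hB₂
    have e3 : I₂.card ≤ B₂.card := Finset.card_le_card hI₂
    omega

end Core

section Core2
variable {n : ℕ} {B : Finset (Finset (Fin n))} {k : ℕ}

/-- any independent subset of X extends to one of full rank in X -/
lemma exists_max_indep (hB : IsMatroidBases B) (hcard : ∀ S ∈ B, S.card = k)
    {I X : Finset (Fin n)} (hI : Indep B I) (hIX : I ⊆ X) :
    ∃ J, I ⊆ J ∧ J ⊆ X ∧ Indep B J ∧ J.card = rkN B X := by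
  classical
  have hne : (X.powerset.filter fun J => I ⊆ J ∧ Indep B J).Nonempty :=
    ⟨I, by simp [Finset.mem_powerset, hIX, hI]⟩
  obtain ⟨J, hJmem, hmax⟩ := Finset.exists_max_image _ (fun J => J.card) hne
  rw [Finset.mem_filter, Finset.mem_powerset] at hJmem
  obtain ⟨hJX, hIJ, hJind⟩ := hJmem
  refine ⟨J, hIJ, hJX, hJind, le_antisymm (indep_card_le_rkN hJind hJX) ?_⟩
  by_contra hc
  push_neg at hc
  obtain ⟨B₀, hB₀, hB₀c⟩ := exists_rkN hB.1 X
  have hind : Indep B (B₀ ∩ X) := ⟨B₀, hB₀, inter_subset_left⟩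
  obtain ⟨y, hy, hyJ, hyind⟩ := augmentation hB hcard hJind hind (by omega)
  have : insert y J ∈ X.powerset.filter fun J => I ⊆ J ∧ Indep B J := by
    rw [Finset.mem_filter, Finset.mem_powerset]
    exact ⟨Finset.insert_subset (Finset.mem_of_mem_inter_right hy) hJX,
      hIJ.trans (Finset.subset_insert _ _), hyind⟩
  have := hmax _ this
  rw [Finset.card_insert_of_notMem hyJ] at this
  omega

lemma rkN_submod (hB : IsMatroidBases B) (hcard : ∀ S ∈ B, S.card = k)
    (S T : Finset (Fin n)) :
    rkN B (S ∪ T) + rkN B (S ∩ T) ≤ rkN B S + rkN B T := by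
  classical
  have hIe : Indep B ∅ := ⟨hB.1.choose, hB.1.choose_spec, Finset.empty_subset _⟩
  obtain ⟨I, -, hIX, hIind, hIc⟩ := exists_max_indep hB hcard hIe (Finset.empty_subset (S ∩ T))
  obtain ⟨J, hIJ, hJX, hJind, hJc⟩ :=
    exists_max_indep (X := S ∪ T) hB hcard hIind
      (hIX.trans (by intro x hx; rw [Finset.mem_inter] at hx; exact Finset.mem_union_left _ hx.1))
  have hJS : (J ∩ S).card ≤ rkN B S := indep_card_le_rkN ⟨hJind.choose, hJind.choose_spec.1,
    inter_subset_left.trans hJind.choose_spec.2⟩ inter_subset_right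
  have hJT : (J ∩ T).card ≤ rkN B T := indep_card_le_rkN ⟨hJind.choose, hJind.choose_spec.1,
    inter_subset_left.trans hJind.choose_spec.2⟩ inter_subset_right
  have hcards : (J ∩ S).card + (J ∩ T).card = (J ∩ (S ∪ T)).card + (J ∩ (S ∩ T)).card := by
    rw [← Finset.card_union_add_card_inter]
    have e1 : (J ∩ S) ∪ (J ∩ T) = J ∩ (S ∪ T) := by ext a; simp [Finset.mem_union, Finset.mem_inter]; tauto
    have e2 : (J ∩ S) ∩ (J ∩ T) = J ∩ (S ∩ T) := by ext a; simp [Finset.mem_inter]; tauto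
    rw [e1, e2]
  have h1 : J ∩ (S ∪ T) = J := Finset.inter_eq_left.mpr hJX
  have h1c : (J ∩ (S ∪ T)).card = rkN B (S ∪ T) := by rw [h1]; exact hJc
  have h2 : I.card ≤ (J ∩ (S ∩ T)).card :=
    Finset.card_le_card (Finset.subset_inter hIJ hIX)
  omega

lemma rkN_univ (hB : IsMatroidBases B) (hcard : ∀ S ∈ B, S.card = k) :
    rkN B Finset.univ = k := by
  obtain ⟨B₀, hB₀⟩ := hB.1
  refine le_antisymm (rkN_le fun B' hB' => ?_) ?_
  · rw [Finset.inter_univ]; exact le_of_eq (hcard _ hB')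
  · have := card_inter_le_rkN hB₀ Finset.univ
    rwa [Finset.inter_univ, hcard _ hB₀] at this

lemma rkN_le_k (hB : IsMatroidBases B) (hcard : ∀ S ∈ B, S.card = k) (S : Finset (Fin n)) :
    rkN B S ≤ k := by
  rw [← rkN_univ hB hcard]; exact rkN_mono (Finset.subset_univ S)

lemma rkN_insert_le (S : Finset (Fin n)) (x : Fin n) :
    rkN B (insert x S) ≤ rkN B S + 1 :=
  rkN_le fun B' hB' => by
    calc (B' ∩ insert x S).card ≤ (insert x (B' ∩ S)).card :=
          Finset.card_le_card (by intro a ha; rw [Finset.mem_inter, Finset.mem_insert] at ha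
                                  rcases ha.2 with h | h
                                  · simp [h]
                                  · exact Finset.mem_insert_of_mem (Finset.mem_inter.mpr ⟨ha.1, h⟩))
      _ ≤ (B' ∩ S).card + 1 := Finset.card_insert_le _ _
      _ ≤ rkN B S + 1 := by have := card_inter_le_rkN hB' S; omega

lemma rkN_empty : rkN B ∅ = 0 :=
  Nat.le_antisymm (rkN_le fun B' _ => by simp) (Nat.zero_le _)

end Core2

section Inter
variable {n : ℕ}

structure RankAx (r : Finset (Fin n) → ℤ) : Prop where
  zero : r ∅ = 0
  nonneg : ∀ S, 0 ≤ r S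
  mono : ∀ ⦃S T⦄, S ⊆ T → r S ≤ r T
  unit : ∀ S x, r (insert x S) ≤ r S + 1
  submod : ∀ S T, r (S ∪ T) + r (S ∩ T) ≤ r S + r T

namespace RankAx

variable {r : Finset (Fin n) → ℤ}

lemma le_card (ax : RankAx r) (S : Finset (Fin n)) : r S ≤ S.card := by
  classical
  induction S using Finset.induction with
  | empty => simp [ax.zero]
  | @insert x S hx ih =>
      have := ax.unit S x
      rw [Finset.card_insert_of_notMem hx]
      push_cast
      linarith

lemma insert_le_add_singleton (ax : RankAx r) (A : Finset (Fin n)) (e : Fin n) :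
    r (insert e A) ≤ r A + r {e} := by
  have h := ax.submod A {e}
  have h2 : A ∪ {e} = insert e A := by
    ext a; simp [Finset.mem_union, Finset.mem_insert]
  have h3 := ax.nonneg (A ∩ {e})
  rw [h2] at h
  linarith

lemma singleton_le_one (ax : RankAx r) (e : Fin n) : r {e} ≤ 1 := by
  have := ax.unit ∅ e
  rw [show insert e (∅ : Finset (Fin n)) = {e} from rfl, ax.zero] at this
  linarith

lemma contract (ax : RankAx r) (e : Fin n) : RankAx (fun S => r (insert e S) - r {e}) := by
  classical
  constructor
  · simp [show insert e (∅ : Finset (Fin n)) = {e} from rfl]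
  · intro S
    have := ax.mono (Finset.singleton_subset_iff.mpr (Finset.mem_insert_self e S))
    linarith
  · intro S T h
    have := ax.mono (Finset.insert_subset_insert e h)
    linarith
  · intro S x
    have h := ax.unit (insert e S) x
    have hc : insert x (insert e S) = insert e (insert x S) := by
      ext a; simp [Finset.mem_insert]; tauto
    rw [hc] at h
    linarith
  · intro S T
    have h := ax.submod (insert e S) (insert e T)
    have h1 : insert e S ∪ insert e T = insert e (S ∪ T) := by
      ext a; simp [Finset.mem_insert, Finset.mem_union]; try tauto
    have h2 : insert e S ∩ insert e T = insert e (S ∩ T) := by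
      ext a; simp [Finset.mem_insert, Finset.mem_inter]; try tauto
    rw [h1, h2] at h
    linarith

end RankAx

theorem inter_thm_aux (m : ℕ) : ∀ (E : Finset (Fin n)) (r₁ r₂ : Finset (Fin n) → ℤ),
    RankAx r₁ → RankAx r₂ → ∀ t : ℕ, E.card ≤ m →
    (∀ T ⊆ E, (t : ℤ) ≤ r₁ T + r₂ (E \ T)) →
    ∃ I ⊆ E, I.card = t ∧ r₁ I = I.card ∧ r₂ I = I.card := by
  classical
  induction m with
  | zero =>
      intro E r₁ r₂ ax₁ ax₂ t hE hcond
      have hE0 : E = ∅ := Finset.card_eq_zero.mp (Nat.le_zero.mp hE)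
      subst hE0
      have := hcond ∅ (by simp)
      rw [Finset.sdiff_empty, ax₁.zero, ax₂.zero] at this
      have ht : t = 0 := by omega
      exact ⟨∅, by simp, by simp [ht], by simp [ax₁.zero], by simp [ax₂.zero]⟩
  | succ m ih =>
      intro E r₁ r₂ ax₁ ax₂ t hE hcond
      by_cases ht : t = 0
      · exact ⟨∅, Finset.empty_subset E, by simp [ht], by simp [ax₁.zero], by simp [ax₂.zero]⟩
      obtain ⟨s, rfl⟩ : ∃ s, t = s + 1 := ⟨t - 1, by omega⟩
      rcases Finset.eq_empty_or_nonempty E with rfl | hEne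
      · have := hcond ∅ (by simp)
        rw [Finset.sdiff_empty, ax₁.zero, ax₂.zero] at this
        omega
      have hcardE : 1 ≤ E.card := Finset.card_pos.mpr hEne
      -- first : delete loops
      by_cases hl : ∃ e ∈ E, r₁ {e} = 0 ∨ r₂ {e} = 0
      · obtain ⟨e, heE, hcase⟩ := hl
        have hE'm : (E.erase e).card ≤ m := by
          rw [Finset.card_erase_of_mem heE]; omega
        have hcond' : ∀ T ⊆ E.erase e, ((s+1 : ℕ) : ℤ) ≤ r₁ T + r₂ (E.erase e \ T) := by
          intro T hT
          have heT : e ∉ T := fun h => Finset.notMem_erase e E (hT h)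
          rcases hcase with h0 | h0
          · have h1 := hcond (insert e T)
              (Finset.insert_subset heE (hT.trans (Finset.erase_subset e E)))
            have h2 : E \ insert e T = E.erase e \ T := by
              ext a
              simp only [Finset.mem_sdiff, Finset.mem_insert, Finset.mem_erase]
              tauto
            have h3 := ax₁.insert_le_add_singleton T e
            rw [h2] at h1
            rw [h0] at h3
            linarith
          · have h1 := hcond T (hT.trans (Finset.erase_subset e E))
            have h2 : E \ T = insert e (E.erase e \ T) := by
              ext a
              simp only [Finset.mem_sdiff, Finset.mem_insert, Finset.mem_erase]
              constructor
              · intro ⟨ha1, ha2⟩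
                by_cases hae : a = e
                · exact Or.inl hae
                · exact Or.inr ⟨⟨hae, ha1⟩, ha2⟩
              · rintro (rfl | ⟨⟨_, ha1⟩, ha2⟩)
                · exact ⟨heE, heT⟩
                · exact ⟨ha1, ha2⟩
            have h3 := ax₂.insert_le_add_singleton (E.erase e \ T) e
            rw [h2] at h1
            rw [h0] at h3
            linarith
        obtain ⟨I, hIE', hrest⟩ := ih (E.erase e) r₁ r₂ ax₁ ax₂ (s+1) hE'm hcond'
        exact ⟨I, hIE'.trans (Finset.erase_subset e E), hrest⟩
      push_neg at hl
      obtain ⟨e, heE⟩ := hEne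
      have he₁ : r₁ {e} = 1 := by
        have h1 := (hl e heE).1
        have h2 := ax₁.singleton_le_one e
        have h3 := ax₁.nonneg {e}
        omega
      have he₂ : r₂ {e} = 1 := by
        have h1 := (hl e heE).2
        have h2 := ax₂.singleton_le_one e
        have h3 := ax₂.nonneg {e}
        omega
      have heE' : e ∉ E.erase e := Finset.notMem_erase e E
      have hE'm : (E.erase e).card ≤ m := by
        rw [Finset.card_erase_of_mem heE]; omega
      by_cases hA : ∀ T ⊆ E.erase e, ((s+1 : ℕ) : ℤ) ≤ r₁ T + r₂ (E.erase e \ T)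
      · obtain ⟨I, hIE', hrest⟩ := ih (E.erase e) r₁ r₂ ax₁ ax₂ (s+1) hE'm hA
        exact ⟨I, hIE'.trans (Finset.erase_subset e E), hrest⟩
      · push_neg at hA
        obtain ⟨X, hXE', hX⟩ := hA
        have heX : e ∉ X := fun h => heE' (hXE' h)
        have axq₁ := ax₁.contract e
        have axq₂ := ax₂.contract e
        have hcondc : ∀ T ⊆ E.erase e, (s : ℤ) ≤
            (r₁ (insert e T) - r₁ {e}) + (r₂ (insert e (E.erase e \ T)) - r₂ {e}) := by
          intro T hT
          have heT : e ∉ T := fun h => heE' (hT h)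
          have k1 := ax₁.submod (insert e T) X
          have k2 := ax₂.submod (insert e (E.erase e \ T)) (E.erase e \ X)
          have i1 : insert e T ∪ X = insert e (T ∪ X) := by
            ext a; simp [Finset.mem_insert, Finset.mem_union]; try tauto
          have i2 : insert e T ∩ X = T ∩ X := Finset.insert_inter_of_notMem heX
          have i3 : insert e (E.erase e \ T) ∪ (E.erase e \ X) =
              insert e (E.erase e \ (T ∩ X)) := by
            ext a
            simp only [Finset.mem_insert, Finset.mem_union, Finset.mem_sdiff,
              Finset.mem_inter, Finset.mem_erase]
            tauto
          have i4 : insert e (E.erase e \ T) ∩ (E.erase e \ X) = E.erase e \ (T ∪ X) := by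
            ext a
            simp only [Finset.mem_insert, Finset.mem_inter, Finset.mem_sdiff,
              Finset.mem_union, Finset.mem_erase]
            constructor
            · rintro ⟨rfl | ⟨ha1, ha2⟩, ha3, ha4⟩
              · exact absurd ha3 (by simp)
              · exact ⟨ha1, by tauto⟩
            · rintro ⟨ha1, ha2⟩
              exact ⟨Or.inr ⟨ha1, fun h => ha2 (Or.inl h)⟩, ha1, fun h => ha2 (Or.inr h)⟩
          have m1 := hcond (insert e (T ∪ X))
            (Finset.insert_subset heE
              ((Finset.union_subset hT hXE').trans (Finset.erase_subset e E)))
          have i5 : E \ insert e (T ∪ X) = E.erase e \ (T ∪ X) := by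
            ext a
            simp only [Finset.mem_sdiff, Finset.mem_insert, Finset.mem_erase, Finset.mem_union]
            tauto
          have m2 := hcond (T ∩ X)
            ((Finset.inter_subset_left.trans hT).trans (Finset.erase_subset e E))
          have i6 : E \ (T ∩ X) = insert e (E.erase e \ (T ∩ X)) := by
            ext a
            simp only [Finset.mem_sdiff, Finset.mem_insert, Finset.mem_erase, Finset.mem_inter]
            constructor
            · intro ⟨ha1, ha2⟩
              by_cases hae : a = e
              · exact Or.inl hae
              · exact Or.inr ⟨⟨hae, ha1⟩, ha2⟩
            · rintro (rfl | ⟨⟨_, ha1⟩, ha2⟩)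
              · exact ⟨heE, fun h => heT h.1⟩
              · exact ⟨ha1, ha2⟩
          rw [i1, i2] at k1
          rw [i3, i4] at k2
          rw [i5] at m1
          rw [i6] at m2
          push_cast at m1 m2 hX ⊢
          linarith
        obtain ⟨I', hI'E', hI'card, hq₁, hq₂⟩ :=
          ih (E.erase e) _ _ axq₁ axq₂ s hE'm hcondc
        have heI' : e ∉ I' := fun h => heE' (hI'E' h)
        refine ⟨insert e I',
          Finset.insert_subset heE (hI'E'.trans (Finset.erase_subset e E)), ?_, ?_, ?_⟩
        · rw [Finset.card_insert_of_notMem heI', hI'card]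
        · rw [Finset.card_insert_of_notMem heI']
          push_cast
          rw [hI'card] at hq₁
          push_cast at hq₁
          linarith
        · rw [Finset.card_insert_of_notMem heI']
          push_cast
          rw [hI'card] at hq₂
          push_cast at hq₂
          linarith

end Inter

section Extract
variable {n : ℕ} {B : Finset (Finset (Fin n))} {k : ℕ}

def rkZ (B : Finset (Finset (Fin n))) (S : Finset (Fin n)) : ℤ := (rkN B S : ℤ)

def vsum (v : Fin n → ℤ) (S : Finset (Fin n)) : ℤ := ∑ i ∈ S, v i

lemma rkZ_axioms (hB : IsMatroidBases B) (hcard : ∀ S ∈ B, S.card = k) :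
    RankAx (rkZ B) := by
  constructor
  · simp [rkZ, rkN_empty]
  · intro S; simp [rkZ]
  · intro S T h; simp only [rkZ]; exact_mod_cast rkN_mono h
  · intro S x; simp only [rkZ]; exact_mod_cast rkN_insert_le S x
  · intro S T; simp only [rkZ]; exact_mod_cast rkN_submod hB hcard S T

lemma rkN_union_le_add_card (A C : Finset (Fin n)) :
    rkN B (A ∪ C) ≤ rkN B A + C.card := by
  apply rkN_le
  intro B' hB'
  calc (B' ∩ (A ∪ C)).card ≤ ((B' ∩ A) ∪ C).card := by
        apply Finset.card_le_card
        intro a ha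
        rw [Finset.mem_inter, Finset.mem_union] at ha
        rcases ha.2 with h | h
        · exact Finset.mem_union_left _ (Finset.mem_inter.mpr ⟨ha.1, h⟩)
        · exact Finset.mem_union_right _ h
    _ ≤ (B' ∩ A).card + C.card := Finset.card_union_le _ _
    _ ≤ rkN B A + C.card := by have := card_inter_le_rkN hB' A; omega

lemma RankAx.union_le_add_card {r : Finset (Fin n) → ℤ} (ax : RankAx r)
    (X Y : Finset (Fin n)) : r (X ∪ Y) ≤ r X + Y.card := by
  classical
  induction Y using Finset.induction with
  | empty => simp
  | @insert a Y ha ih =>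
      have h1 : X ∪ insert a Y = insert a (X ∪ Y) := by
        ext b; simp [Finset.mem_union, Finset.mem_insert]; try tauto
      have h2 := ax.unit (X ∪ Y) a
      rw [h1, Finset.card_insert_of_notMem ha]
      push_cast
      linarith

/-- independence transfer for abstract ranks -/
lemma RankAx.card_inter_le {r : Finset (Fin n) → ℤ} (ax : RankAx r)
    {I : Finset (Fin n)} (hI : r I = I.card) (T : Finset (Fin n)) :
    ((I ∩ T).card : ℤ) ≤ r T := by
  classical
  have h1 : I ⊆ (I ∩ T) ∪ (I \ T) := by
    intro a ha
    by_cases h : a ∈ T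
    · exact Finset.mem_union_left _ (Finset.mem_inter.mpr ⟨ha, h⟩)
    · exact Finset.mem_union_right _ (Finset.mem_sdiff.mpr ⟨ha, h⟩)
  have h2 : r I ≤ r (I ∩ T) + (I \ T).card :=
    le_trans (ax.mono h1) (ax.union_le_add_card _ _)
  have h3 : (I ∩ T).card + (I \ T).card = I.card := Finset.card_inter_add_card_sdiff I T
  have h4 : r (I ∩ T) ≤ r T := ax.mono Finset.inter_subset_right
  have h5 : (I ∩ T).card ≤ I.card := Finset.card_le_card Finset.inter_subset_left
  -- r(I∩T) ≥ |I∩T|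
  have h6 : ((I ∩ T).card : ℤ) ≤ r (I ∩ T) := by
    have := ax.le_card (I ∩ T)
    push_cast at *
    linarith
  linarith

section Rho
variable (B) (k)

/-- the submodular function encoding the upper bounds -/
def fup (N : ℕ) (v : Fin n → ℤ) (C : Finset (Fin n)) : ℤ :=
  vsum v C - ((N : ℤ) - 1) * ((k : ℤ) - rkZ B (Finset.univ \ C))

noncomputable def rho (N : ℕ) (v : Fin n → ℤ) (S : Finset (Fin n)) : ℤ :=
  (Finset.univ.powerset).inf' ⟨∅, by simp⟩
    (fun C => fup B k N v C + ((S \ C).card : ℤ))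

end Rho

lemma rho_le (B : Finset (Finset (Fin n))) (k N : ℕ) (v : Fin n → ℤ) (S C : Finset (Fin n)) :
    rho B k N v S ≤ fup B k N v C + ((S \ C).card : ℤ) :=
  Finset.inf'_le _ (by simp)

lemma le_rho (B : Finset (Finset (Fin n))) (k N : ℕ) (v : Fin n → ℤ) (S : Finset (Fin n)) {c : ℤ}
    (h : ∀ C, c ≤ fup B k N v C + ((S \ C).card : ℤ)) : c ≤ rho B k N v S :=
  Finset.le_inf' _ _ (fun C _ => h C)

lemma rho_attain (B : Finset (Finset (Fin n))) (k N : ℕ) (v : Fin n → ℤ) (S : Finset (Fin n)) :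
    ∃ C, rho B k N v S = fup B k N v C + ((S \ C).card : ℤ) := by
  obtain ⟨C, -, hC⟩ := Finset.exists_mem_eq_inf'
    (⟨∅, Finset.empty_mem_powerset _⟩ : ((Finset.univ : Finset (Fin n)).powerset).Nonempty)
    (fun C => fup B k N v C + ((S \ C).card : ℤ))
  exact ⟨C, hC⟩

lemma vsum_compl (v : Fin n → ℤ) (C : Finset (Fin n)) :
    vsum v (Finset.univ \ C) + vsum v C = vsum v Finset.univ :=
  Finset.sum_sdiff (Finset.subset_univ C)

lemma fup_nonneg (hB : IsMatroidBases B) (hcard : ∀ S ∈ B, S.card = k)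
    {N : ℕ} (hN : 1 ≤ N) {v : Fin n → ℤ}
    (hineq : ∀ S, vsum v S ≤ (N : ℤ) * rkZ B S)
    (heq : vsum v Finset.univ = (N : ℤ) * (k : ℤ)) (C : Finset (Fin n)) :
    0 ≤ fup B k N v C := by
  have h1 := vsum_compl v C
  have h2 := hineq (Finset.univ \ C)
  have h3 : rkZ B (Finset.univ \ C) ≤ (k : ℤ) := by
    simp only [rkZ]
    exact_mod_cast rkN_le_k hB hcard _
  have h4 : (1 : ℤ) ≤ (N : ℤ) := by exact_mod_cast hN
  have h5 : (0 : ℤ) ≤ rkZ B (Finset.univ \ C) := by simp [rkZ]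
  simp only [fup]
  nlinarith

lemma card_sdiff_submod (S₁ S₂ C₁ C₂ : Finset (Fin n)) :
    (((S₁ ∪ S₂) \ (C₁ ∪ C₂)).card : ℤ) + (((S₁ ∩ S₂) \ (C₁ ∩ C₂)).card : ℤ) ≤
      ((S₁ \ C₁).card : ℤ) + ((S₂ \ C₂).card : ℤ) := by
  classical
  have key : ∀ X : Finset (Fin n), X.card = ∑ i, (if i ∈ X then 1 else 0) := by
    intro X
    rw [Finset.sum_ite_mem, Finset.univ_inter, Finset.card_eq_sum_ones]
  have hineq : ((S₁ ∪ S₂) \ (C₁ ∪ C₂)).card + ((S₁ ∩ S₂) \ (C₁ ∩ C₂)).card ≤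
      (S₁ \ C₁).card + (S₂ \ C₂).card := by
    rw [key ((S₁ ∪ S₂) \ (C₁ ∪ C₂)), key ((S₁ ∩ S₂) \ (C₁ ∩ C₂)),
      key (S₁ \ C₁), key (S₂ \ C₂), ← Finset.sum_add_distrib, ← Finset.sum_add_distrib]
    apply Finset.sum_le_sum
    intro i _
    by_cases h1 : i ∈ S₁ <;> by_cases h2 : i ∈ S₂ <;>
      by_cases h3 : i ∈ C₁ <;> by_cases h4 : i ∈ C₂ <;>
      simp [h1, h2, h3, h4, Finset.mem_sdiff, Finset.mem_union, Finset.mem_inter]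
  exact_mod_cast hineq

lemma fup_submod (hB : IsMatroidBases B) (hcard : ∀ S ∈ B, S.card = k)
    {N : ℕ} (hN : 1 ≤ N) (v : Fin n → ℤ) (C₁ C₂ : Finset (Fin n)) :
    fup B k N v (C₁ ∪ C₂) + fup B k N v (C₁ ∩ C₂) ≤ fup B k N v C₁ + fup B k N v C₂ := by
  have hv : vsum v (C₁ ∪ C₂) + vsum v (C₁ ∩ C₂) = vsum v C₁ + vsum v C₂ :=
    Finset.sum_union_inter
  have e1 : Finset.univ \ (C₁ ∪ C₂) = (Finset.univ \ C₁) ∩ (Finset.univ \ C₂) := by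
    ext a; simp [Finset.mem_sdiff, Finset.mem_inter, Finset.mem_union]; try tauto
  have e2 : Finset.univ \ (C₁ ∩ C₂) = (Finset.univ \ C₁) ∪ (Finset.univ \ C₂) := by
    ext a; simp [Finset.mem_sdiff, Finset.mem_inter, Finset.mem_union]; try tauto
  have hr : rkZ B ((Finset.univ \ C₁) ∪ (Finset.univ \ C₂)) +
      rkZ B ((Finset.univ \ C₁) ∩ (Finset.univ \ C₂)) ≤
      rkZ B (Finset.univ \ C₁) + rkZ B (Finset.univ \ C₂) := by
    simp only [rkZ]
    exact_mod_cast rkN_submod hB hcard _ _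
  have h4 : (0 : ℤ) ≤ (N : ℤ) - 1 := by
    have : (1 : ℤ) ≤ (N : ℤ) := by exact_mod_cast hN
    linarith
  simp only [fup, e1, e2]
  nlinarith

lemma rho_axioms (hB : IsMatroidBases B) (hcard : ∀ S ∈ B, S.card = k)
    {N : ℕ} (hN : 1 ≤ N) {v : Fin n → ℤ}
    (hineq : ∀ S, vsum v S ≤ (N : ℤ) * rkZ B S)
    (heq : vsum v Finset.univ = (N : ℤ) * (k : ℤ)) :
    RankAx (rho B k N v) := by
  have hfnn := fup_nonneg hB hcard hN hineq heq
  constructor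
  · refine le_antisymm ?_ (le_rho B k N v ∅ fun C => ?_)
    · have h := rho_le B k N v ∅ ∅
      have h2 : fup B k N v ∅ = 0 := by
        simp [fup, vsum, Finset.sdiff_empty, rkZ, rkN_univ hB hcard]
      simpa [h2] using h
    · have h1 := hfnn C
      positivity
  · intro S
    refine le_rho B k N v S fun C => ?_
    have h1 := hfnn C
    positivity
  · intro S T h
    refine le_rho B k N v T fun C => ?_
    have h1 := rho_le B k N v S C
    have h2 : ((S \ C).card : ℤ) ≤ ((T \ C).card : ℤ) := by
      exact_mod_cast Finset.card_le_card (Finset.sdiff_subset_sdiff h (subset_refl C))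
    linarith
  · intro S x
    obtain ⟨C, hC⟩ := rho_attain B k N v S
    have h2 := rho_le B k N v (insert x S) C
    have h3 : ((insert x S \ C).card : ℤ) ≤ ((S \ C).card : ℤ) + 1 := by
      have hsub : insert x S \ C ⊆ insert x (S \ C) := by
        intro a ha
        rw [Finset.mem_sdiff, Finset.mem_insert] at ha
        rcases ha.1 with h | h
        · simp [h]
        · exact Finset.mem_insert_of_mem (Finset.mem_sdiff.mpr ⟨h, ha.2⟩)
      calc ((insert x S \ C).card : ℤ) ≤ ((insert x (S \ C)).card : ℤ) := by
            exact_mod_cast Finset.card_le_card hsub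
        _ ≤ ((S \ C).card : ℤ) + 1 := by exact_mod_cast Finset.card_insert_le _ _
    linarith
  · intro S T
    obtain ⟨C₁, hC₁⟩ := rho_attain B k N v S
    obtain ⟨C₂, hC₂⟩ := rho_attain B k N v T
    have h3 := rho_le B k N v (S ∪ T) (C₁ ∪ C₂)
    have h4 := rho_le B k N v (S ∩ T) (C₁ ∩ C₂)
    have h5 := fup_submod hB hcard hN v C₁ C₂
    have h6 := card_sdiff_submod S T C₁ C₂
    linarith

end Extract

section Main
variable {n : ℕ} {B : Finset (Finset (Fin n))} {k : ℕ}

lemma rkN_le_inter_add (D T : Finset (Fin n)) :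
    rkN B D ≤ rkN B (D ∩ T) + (D \ T).card := by
  have h1 : D ⊆ (D ∩ T) ∪ (D \ T) := by
    intro a ha
    by_cases h : a ∈ T
    · exact Finset.mem_union_left _ (Finset.mem_inter.mpr ⟨ha, h⟩)
    · exact Finset.mem_union_right _ (Finset.mem_sdiff.mpr ⟨ha, h⟩)
  exact le_trans (rkN_mono h1) (rkN_union_le_add_card _ _)

lemma extract (hB : IsMatroidBases B) (hcard : ∀ S ∈ B, S.card = k)
    {N : ℕ} (hN : 1 ≤ N) {v : Fin n → ℤ}
    (hv0 : ∀ i, 0 ≤ v i)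
    (hineq : ∀ S, vsum v S ≤ (N : ℤ) * rkZ B S)
    (heq : vsum v Finset.univ = (N : ℤ) * (k : ℤ)) :
    ∃ B₁ ∈ B, (∀ i ∈ B₁, 1 ≤ v i) ∧
      ∀ S, vsum v S ≤ ((N : ℤ) - 1) * rkZ B S + ((B₁ ∩ S).card : ℤ) := by
  classical
  have ax₁ := rkZ_axioms hB hcard
  have ax₂ := rho_axioms hB hcard hN hineq heq
  have hN1 : (1 : ℤ) ≤ (N : ℤ) := by exact_mod_cast hN
  have hcond : ∀ T ⊆ (Finset.univ : Finset (Fin n)),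
      (k : ℤ) ≤ rkZ B T + rho B k N v (Finset.univ \ T) := by
    intro T _
    have hrho := le_rho B k N v (Finset.univ \ T) (c := (k : ℤ) - rkZ B T) fun C => by
      have hD : (Finset.univ \ T) \ C = (Finset.univ \ C) \ T := by
        ext a; simp [Finset.mem_sdiff]; tauto
      have h1 := vsum_compl v C
      have h2 := hineq (Finset.univ \ C)
      have h3 : rkZ B (Finset.univ \ C) ≤ rkZ B T + (((Finset.univ \ C) \ T).card : ℤ) := by
        have hh := rkN_le_inter_add (B := B) (Finset.univ \ C) T
        have hm : rkN B ((Finset.univ \ C) ∩ T) ≤ rkN B T := rkN_mono Finset.inter_subset_right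
        simp only [rkZ]
        push_cast
        omega
      have h4 : (0 : ℤ) ≤ rkZ B (Finset.univ \ C) := by simp [rkZ]
      simp only [fup, hD]
      rw [heq] at h1
      nlinarith
    linarith
  obtain ⟨I, -, hIcard, hr1, hr2⟩ := inter_thm_aux (Finset.univ : Finset (Fin n)).card
    Finset.univ (rkZ B) (rho B k N v) ax₁ ax₂ k (le_refl _) hcond
  have hIB : I ∈ B := by
    have hr : rkN B I = I.card := by
      simp only [rkZ] at hr1
      exact_mod_cast hr1
    obtain ⟨B', hB', hIB'⟩ := indep_of_rkN_eq hB.1 hr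
    have : I = B' := Finset.eq_of_subset_of_card_le hIB' (by rw [hcard _ hB', hIcard])
    rwa [this]
  have hup : ∀ T, ((I ∩ T).card : ℤ) ≤ fup B k N v T := by
    intro T
    refine le_trans (ax₂.card_inter_le hr2 T) ?_
    have h := rho_le B k N v T T
    simpa using h
  have hfinal : ∀ S, vsum v S ≤ ((N : ℤ) - 1) * rkZ B S + ((I ∩ S).card : ℤ) := by
    intro S
    have h1 := hup (Finset.univ \ S)
    have e1 : I ∩ (Finset.univ \ S) = I \ S := by ext a; simp
    have e2 : Finset.univ \ (Finset.univ \ S) = S := by ext a; simp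
    have h2 : ((I ∩ S).card : ℤ) + ((I \ S).card : ℤ) = (k : ℤ) := by
      have := Finset.card_inter_add_card_sdiff I S
      rw [← hIcard]
      push_cast
      omega
    have h3 : vsum v (Finset.univ \ S) = (N : ℤ) * k - vsum v S := by
      have := vsum_compl v S
      rw [heq] at this
      linarith
    rw [e1] at h1
    simp only [fup, e2] at h1
    rw [h3] at h1
    linarith
  refine ⟨I, hIB, fun i hi => ?_, hfinal⟩
  by_contra hlt
  push_neg at hlt
  have hvi : v i = 0 := le_antisymm (by omega) (hv0 i)
  have h1 := hfinal (Finset.univ.erase i)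
  have h2 : vsum v (Finset.univ.erase i) = (N : ℤ) * k := by
    have hh : vsum v (Finset.univ.erase i) + v i = vsum v Finset.univ :=
      Finset.sum_erase_add _ _ (Finset.mem_univ i)
    rw [heq] at hh
    linarith
  have h3 : rkZ B (Finset.univ.erase i) ≤ (k : ℤ) := by
    simp only [rkZ]; exact_mod_cast rkN_le_k hB hcard _
  have h4 : ((I ∩ Finset.univ.erase i).card : ℤ) = (k : ℤ) - 1 := by
    have e : I ∩ Finset.univ.erase i = I.erase i := by
      ext a; simp [Finset.mem_erase]; tauto
    have hk1 : 1 ≤ k := by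
      rw [← hIcard]
      exact Finset.card_pos.mpr ⟨i, hi⟩
    rw [e, Finset.card_erase_of_mem hi, hIcard]
    push_cast
    omega
  have h5 : (0 : ℤ) ≤ rkZ B (Finset.univ.erase i) := by simp [rkZ]
  rw [h2, h4] at h1
  nlinarith

lemma indZ_sum_eq (S T : Finset (Fin n)) :
    ∑ i ∈ S, indZ T i = ((T ∩ S).card : ℤ) := by
  classical
  simp only [indZ]
  rw [Finset.sum_ite_mem]
  rw [Finset.inter_comm]
  simp

theorem decompose (hB : IsMatroidBases B) (hcard : ∀ S ∈ B, S.card = k) :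
    ∀ (N : ℕ), 1 ≤ N → ∀ v : Fin n → ℤ, (∀ i, 0 ≤ v i) →
    (∀ S, vsum v S ≤ (N : ℤ) * rkZ B S) → vsum v Finset.univ = (N : ℤ) * (k : ℤ) →
    ∃ f : Fin N → Finset (Fin n), (∀ t, f t ∈ B) ∧ v = ∑ t, indZ (f t) := by
  intro N
  induction N with
  | zero => omega
  | succ m ih =>
      intro _ v hv0 hineq heq
      obtain ⟨B₁, hB₁, hsupp, hineq'⟩ := extract hB hcard (N := m + 1) (by omega) hv0 hineq heq
      set v' : Fin n → ℤ := fun i => v i - indZ B₁ i with hv'def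
      have hv'0 : ∀ i, 0 ≤ v' i := by
        intro i
        by_cases h : i ∈ B₁
        · have := hsupp i h
          simp [hv'def, indZ, h]
          omega
        · have := hv0 i
          simp [hv'def, indZ, h]
          omega
      have hsum : ∀ S, vsum v' S = vsum v S - ((B₁ ∩ S).card : ℤ) := by
        intro S
        simp only [hv'def, vsum, Finset.sum_sub_distrib]
        rw [indZ_sum_eq]
      have hBcard : B₁.card = k := hcard _ hB₁
      rcases Nat.eq_zero_or_pos m with rfl | hm
      · -- base case N = 1 : v = indZ B₁
        have hzero : vsum v' Finset.univ = 0 := by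
          rw [hsum, Finset.inter_univ, hBcard, heq]
          push_cast
          ring
        have hall : ∀ i, v' i = 0 := by
          intro i
          have h := (Finset.sum_eq_zero_iff_of_nonneg (fun i _ => hv'0 i)).mp hzero
          exact h i (Finset.mem_univ i)
        refine ⟨fun _ => B₁, fun _ => hB₁, ?_⟩
        funext i
        have := hall i
        simp only [hv'def] at this
        simp only [Finset.sum_apply]
        rw [Finset.sum_const]
        simp
        omega
      · have hineq'' : ∀ S, vsum v' S ≤ (m : ℤ) * rkZ B S := by
          intro S
          have h := hineq' S
          rw [hsum]
          push_cast at h ⊢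
          linarith
        have heq'' : vsum v' Finset.univ = (m : ℤ) * (k : ℤ) := by
          rw [hsum, Finset.inter_univ, hBcard, heq]
          push_cast
          ring
        obtain ⟨f', hf', hval⟩ := ih hm v' hv'0 hineq'' heq''
        refine ⟨Fin.cons B₁ f', ?_, ?_⟩
        · intro t
          refine Fin.cases ?_ ?_ t
          · simpa using hB₁
          · intro j; simpa using hf' j
        · have hfc : ∑ t : Fin (m + 1), indZ ((Fin.cons B₁ f' : Fin (m+1) → Finset (Fin n)) t) =
              indZ B₁ + ∑ t : Fin m, indZ (f' t) := by
            rw [Fin.sum_univ_succ]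
            simp
          rw [hfc, ← hval]
          funext i
          simp [hv'def]
  
end Main

theorem final_thm (n k : ℕ)
    (B : Finset (Finset (Fin n))) (hB : IsMatroidBases B)
    (hcard : ∀ S ∈ B, S.card = k)
    (N : ℕ) (hN : 1 ≤ N) (v : Fin n → ℤ) :
    ((∀ i, 0 ≤ v i) ∧ (∑ i, v i = (N : ℤ) * (k : ℤ)) ∧
        ∃ y ∈ convexHull ℝ ((fun S => coeZ (indZ S)) '' (B : Set (Finset (Fin n)))),
          coeZ v = (N : ℝ) • y) ↔
      ∃ f : Fin N → Finset (Fin n), (∀ t, f t ∈ B) ∧ v = ∑ t, indZ (f t) := by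
  classical
  constructor
  · rintro ⟨hpos, hsum, y, hy, hvy⟩
    have hineq : ∀ S, vsum v S ≤ (N : ℤ) * rkZ B S := by
      intro S
      have hconv : Convex ℝ {x : Fin n → ℝ | ∑ i ∈ S, x i ≤ (rkN B S : ℝ)} := by
        apply convex_halfSpace_le
        exact ⟨fun a b => Finset.sum_add_distrib, fun c x => by simp [Finset.mul_sum]⟩
      have hsub : ((fun S => coeZ (indZ S)) '' (B : Set (Finset (Fin n)))) ⊆
          {x : Fin n → ℝ | ∑ i ∈ S, x i ≤ (rkN B S : ℝ)} := by
        rintro _ ⟨S', hS', rfl⟩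
        simp only [Set.mem_setOf_eq, coeZ, indZ]
        push_cast
        have h1 : ∑ i ∈ S, (if i ∈ S' then (1 : ℝ) else 0) = ((S ∩ S').card : ℝ) := by
          rw [Finset.sum_ite_mem]
          simp
        rw [h1]
        have h2 : (S ∩ S').card ≤ rkN B S := by
          rw [Finset.inter_comm]
          exact card_inter_le_rkN (Finset.mem_coe.mp hS') S
        exact_mod_cast h2
      have hyK := convexHull_min hsub hconv hy
      have hvS : ∑ i ∈ S, (v i : ℝ) = (N : ℝ) * ∑ i ∈ S, y i := by
        have : ∀ i, (v i : ℝ) = (N : ℝ) * y i := by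
          intro i
          have := congrFun hvy i
          simpa [coeZ] using this
        rw [Finset.sum_congr rfl fun i _ => this i, Finset.mul_sum]
      have hNR : (0 : ℝ) ≤ (N : ℝ) := by positivity
      have : ∑ i ∈ S, (v i : ℝ) ≤ (N : ℝ) * (rkN B S : ℝ) := by
        rw [hvS]
        exact mul_le_mul_of_nonneg_left hyK hNR
      have : ((vsum v S : ℤ) : ℝ) ≤ (((N : ℤ) * rkZ B S : ℤ) : ℝ) := by
        push_cast
        simpa [vsum, rkZ] using this
      exact_mod_cast this
    exact decompose hB hcard N hN v hpos hineq hsum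
  · rintro ⟨f, hf, hval⟩
    have hNR : (N : ℝ) ≠ 0 := by positivity
    have happ : ∀ i, v i = ∑ t, indZ (f t) i := by
      intro i
      rw [hval]
      simp
    refine ⟨?_, ?_, ?_⟩
    · intro i
      rw [happ i]
      apply Finset.sum_nonneg
      intro t _
      simp only [indZ]
      split <;> omega
    · have h1 : ∑ i, v i = ∑ t : Fin N, ∑ i, indZ (f t) i := by
        rw [Finset.sum_congr rfl fun i _ => happ i]
        exact Finset.sum_comm
      rw [h1]
      have h2 : ∀ t : Fin N, ∑ i, indZ (f t) i = (k : ℤ) := by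
        intro t
        rw [indZ_sum_eq, Finset.inter_univ, hcard _ (hf t)]
      rw [Finset.sum_congr rfl fun t _ => h2 t, Finset.sum_const, Finset.card_univ]
      simp [mul_comm]
    · set z : Fin N → (Fin n → ℝ) := fun t => coeZ (indZ (f t)) with hz
      refine ⟨(N : ℝ)⁻¹ • ∑ t, z t, ?_, ?_⟩
      · have hcm : (Finset.univ : Finset (Fin N)).centerMass (fun _ => (1 : ℝ)) z =
            (N : ℝ)⁻¹ • ∑ t, z t := by
          rw [Finset.centerMass]
          simp
        rw [← hcm]
        apply Finset.centerMass_mem_convexHull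
        · intro t _; norm_num
        · simp only [Finset.sum_const, Finset.card_univ, Fintype.card_fin, nsmul_eq_mul, mul_one]
          positivity
        · intro t _
          exact ⟨f t, Finset.mem_coe.mpr (hf t), rfl⟩
      · have hsumz : coeZ v = ∑ t, z t := by
          funext i
          have h := happ i
          simp only [coeZ, hz, Finset.sum_apply]
          rw [h]
          push_cast
          rfl
        rw [hsumz, smul_inv_smul₀ hNR]

/-- Neil White's theorem: for the set `A` of indicator vectors of
the bases of a rank-`k` matroid, the lattice points of the `N`-fold dilate
`N·conv(A)` that are nonnegative with coordinate sum `N·k` are exactly the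
`N`-fold sums of elements of `A`. -/
theorem matroid_base_dilate_lattice_points (n k : ℕ)
    (B : Finset (Finset (Fin n))) (hB : IsMatroidBases B)
    (hcard : ∀ S ∈ B, S.card = k)
    (N : ℕ) (hN : 1 ≤ N) (v : Fin n → ℤ) :
    ((∀ i, 0 ≤ v i) ∧ (∑ i, v i = (N : ℤ) * (k : ℤ)) ∧
        ∃ y ∈ convexHull ℝ ((fun S => coeZ (indZ S)) '' (B : Set (Finset (Fin n)))),
          coeZ v = (N : ℝ) • y) ↔
      ∃ f : Fin N → Finset (Fin n), (∀ t, f t ∈ B) ∧ v = ∑ t, indZ (f t) := by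
  exact final_thm n k B hB hcard N hN v
end
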